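/- arXiv:1710.03117 — 4 statements merged into one kernel-verified Lean document; each statement's English description precedes it below -/
import Mathlib

section
/- There exist a constant a > 0 and a non-decreasing function d : ℕ × ℕ → ℕ with d(ℓ,n) ≤ a·ℓ·log₂(n+1) for all ℓ, n ≥ 1, such that for every finite simple graph G on n vertices and all integers ℓ, m₀ ≥ 1, writing d = d(ℓ,n), at least one of the following holds: (i) G contains an m₀-bounded model of K_{m₀} of depth d; or (ii) there exist disjoint sets C, M ⊆ V(G) such that C ∪ M is a balanced separator in G, |C| ≤ n/ℓ, and for some m ≤ min(m₀, ω_d(G)), M is the support of a min(m₀, ω_d(G))-bounded model of K_m of depth d in G. -/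
open scoped Classical

universe u

/-- `C` is a balanced separator in `G`: every connected component of `G - C`
has at most `(2/3)|V(G)|` vertices. -/
def IsBalancedSeparator {V : Type u} (G : SimpleGraph V) (C : Set V) : Prop :=
  ∀ K : (G.induce Cᶜ).ConnectedComponent, 3 * K.supp.ncard ≤ 2 * Nat.card V

/-- A model of the clique `K_m` of depth `d` in `G`. -/
structure CliqueModel {V : Type u} (G : SimpleGraph V) (m d : ℕ) where
  B : Fin m → Set V
  disj : ∀ i j : Fin m, i ≠ j → Disjoint (B i) (B j)
  conn : ∀ i, (G.induce (B i)).Connected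
  rad : ∀ i, ∃ v : B i, ∀ u : B i, (G.induce (B i)).dist v u ≤ d
  adj : ∀ i j : Fin m, i < j → ∃ u ∈ B i, ∃ v ∈ B j, G.Adj u v

/-- The support of a clique model. -/
def CliqueModel.support {V : Type u} {G : SimpleGraph V} {m d : ℕ}
    (M : CliqueModel G m d) : Set V := ⋃ i, M.B i

/-- An `m₀`-bounded model: each branch set has at most `m₀ * d` vertices. -/
def CliqueModel.Bounded {V : Type u} {G : SimpleGraph V} {m d : ℕ}
    (M : CliqueModel G m d) (m₀ : ℕ) : Prop := ∀ i, (M.B i).ncard ≤ m₀ * d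

/-- `ω_d(G)`: the maximum `m` such that `G` contains a model of `K_m` of depth `d`. -/
noncomputable def omegaDepth {V : Type u} (G : SimpleGraph V) (d : ℕ) : ℕ :=
  sSup {m | Nonempty (CliqueModel G m d)}

/-- Membership in the class `𝒢_{c,ε}`: every subgraph `H` of `G` has a
balanced separator of order at most `c * |V(H)|^(1-ε)`. -/
def MemGSep {V : Type u} (G : SimpleGraph V) (c ε : ℝ) : Prop :=
  ∀ (S : Set V) (H : SimpleGraph S), H ≤ G.induce S →
    ∃ C : Set S, IsBalancedSeparator H C ∧ (C.ncard : ℝ) ≤ c * (S.ncard : ℝ) ^ (1 - ε)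

/-- A model of a graph `H` of depth `r` in `G` (witnessing that `H` is obtained from a
subgraph of `G` by contracting vertex-disjoint subgraphs of radius at most `r`). -/
structure MinorModel {V : Type u} {W : Type w} (G : SimpleGraph V) (H : SimpleGraph W)
    (r : ℕ) where
  B : W → Set V
  disj : ∀ i j : W, i ≠ j → Disjoint (B i) (B j)
  conn : ∀ i, (G.induce (B i)).Connected
  rad : ∀ i, ∃ v : B i, ∀ u : B i, (G.induce (B i)).dist v u ≤ r
  adj : ∀ i j : W, H.Adj i j → ∃ u ∈ B i, ∃ v ∈ B j, G.Adj u v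

/-- `∇_r(G)`: the maximum average degree of a graph obtained from a subgraph of `G`
by contracting vertex-disjoint subgraphs of radius at most `r`. -/
noncomputable def nabla {V : Type u} (G : SimpleGraph V) (r : ℕ) : ℝ :=
  sSup { x | ∃ (m : ℕ) (H : SimpleGraph (Fin m)), 0 < m ∧ Nonempty (MinorModel G H r) ∧
    x = 2 * (H.edgeSet.ncard : ℝ) / m }

/-- A tree decomposition of `G`. -/
structure TreeDecomp {V : Type u} (G : SimpleGraph V) where
  ι : Type u
  T : SimpleGraph ι
  tree : T.IsTree
  bag : ι → Set V
  hedge : ∀ u v : V, G.Adj u v → ∃ z, u ∈ bag z ∧ v ∈ bag z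
  hvert : ∀ v : V, (T.induce {z | v ∈ bag z}).Connected

/-- `G` has treewidth at most `k`. -/
def TreewidthLE {V : Type u} (G : SimpleGraph V) (k : ℕ) : Prop :=
  ∃ D : TreeDecomp G, ∀ z, (D.bag z).ncard ≤ k + 1

/-- `coTW_k(G)`: sets of vertices whose removal brings the treewidth down to at most `k`. -/
def coTW {V : Type u} (G : SimpleGraph V) (k : ℕ) : Set (Set V) :=
  { X | TreewidthLE (G.induce Xᶜ) k }

/-- An `ε`-thin (finitely supported) probability distribution on a collection `𝒳`
of subsets of the vertex set. -/
structure ThinDist {V : Type u} (𝒳 : Set (Set V)) (ε : ℝ) where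
  supp : Finset (Set V)
  p : Set V → ℝ
  nonneg : ∀ X, 0 ≤ p X
  mem : ∀ X ∈ supp, X ∈ 𝒳
  zero_outside : ∀ X ∉ supp, p X = 0
  total : ∑ X ∈ supp, p X = 1
  thin : ∀ v : V, ∑ X ∈ supp, (if v ∈ X then p X else 0) ≤ ε

/-!
A clique model is grown greedily while a cut `C` is maintained, keeping track of the unique
component `K` of `G - (C ∪ support)` with more than `2n/3` vertices. Branch sets that do not
touch `K` are discarded. If every remaining branch set has a neighbour within distance `d - 1` of
some `u ∈ K`, shortest paths from `u` form a new branch set of at most `(m + 1) d` vertices inside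
`K`, and the model grows. Otherwise some branch set touching `K` is farther than `d - 1` from `u`,
so breadth-first search from `u` inside `K` has `d - 1 ≥ 2ℓE` nonempty layers, where `n < 2^E`.
As neither the inner balls can grow by a factor `1 + 1/ℓ` nor the outer remainders shrink by it
for `ℓE` consecutive layers, some layer `L` has at most a `1/ℓ` fraction of the vertices of one
side, chosen too small to contain the big component. Adding `L` to `C` shrinks `K`, and the cost
`ℓ |L|` is charged to that side, which leaves `K` for good. So `ℓ |C| ≤ n` when no big component
is left, and `C ∪ support` is then the balanced separator.
-/
lemma two_mul_le_of_forall_lt_mul {b : ℕ → ℕ} {ℓ j : ℕ} (hℓ : 0 < ℓ)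
    (h : ∀ i, j ≤ i → i < j + ℓ → (ℓ + 1) * b i < ℓ * b (i + 1)) : 2 * b j ≤ b (j + ℓ) := by
  have key : ∀ t ≤ ℓ, ℓ * b j + t * b j ≤ ℓ * b (j + t) := by
    intro t
    induction t with
    | zero => simp
    | succ t ih =>
      intro ht
      have ih := ih (by omega)
      have hmono : b j ≤ b (j + t) := Nat.le_of_mul_le_mul_left (by nlinarith) hℓ
      have hstep := h (j + t) (by omega) (by omega)
      rw [← add_assoc]
      nlinarith
  exact Nat.le_of_mul_le_mul_left (by linarith [key ℓ le_rfl]) hℓ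

/-- A sequence that never grows by less than a factor `1 + 1/ℓ` doubles every `ℓ` steps. -/
lemma exists_mul_succ_le_of_lt_two_pow {b : ℕ → ℕ} {ℓ E : ℕ} (hℓ : 0 < ℓ) (h0 : 0 < b 0)
    (hE : b (ℓ * E) < 2 ^ E) : ∃ j < ℓ * E, ℓ * b (j + 1) ≤ (ℓ + 1) * b j := by
  by_contra h
  push Not at h
  have hpow : ∀ k ≤ E, 2 ^ k ≤ b (ℓ * k) := by
    intro k
    induction k with
    | zero => simpa [Nat.one_le_iff_ne_zero, ← Nat.pos_iff_ne_zero] using h0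
    | succ k ih =>
      intro hk
      have hdouble := two_mul_le_of_forall_lt_mul (b := b) (j := ℓ * k) hℓ fun i _ hi =>
        h i (by nlinarith)
      rw [pow_succ, mul_add, mul_one]
      linarith [ih (by omega)]
  exact absurd (hpow E le_rfl) (not_le.mpr hE)

lemma exists_mul_le_succ_of_lt_two_pow {T : ℕ → ℕ} {ℓ E j₀ : ℕ} (hℓ : 0 < ℓ)
    (h0 : 0 < T (j₀ + ℓ * E)) (hE : T j₀ < 2 ^ E) :
    ∃ j, j₀ ≤ j ∧ j < j₀ + ℓ * E ∧ ℓ * T j ≤ (ℓ + 1) * T (j + 1) := by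
  obtain ⟨i, hi, h⟩ := exists_mul_succ_le_of_lt_two_pow (b := fun i => T (j₀ + ℓ * E - i))
    (E := E) hℓ (by simpa using h0) (by simpa using hE)
  refine ⟨j₀ + ℓ * E - (i + 1), by omega, by omega, ?_⟩
  rwa [show j₀ + ℓ * E - (i + 1) + 1 = j₀ + ℓ * E - i by omega]

namespace SimpleGraph

variable {V : Type*} (G : SimpleGraph V)

def AdjIn (A : Set V) (x y : V) : Prop := x ∈ A ∧ y ∈ A ∧ G.Adj x y

def compIn (A : Set V) (u : V) : Set V :=
  {x | Relation.ReflTransGen (G.AdjIn A) u x ∧ x ∈ A}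

def ballIn (A : Set V) (u : V) : ℕ → Set V
  | 0 => {u}
  | n + 1 => ballIn A u n ∪ {x | x ∈ A ∧ ∃ y ∈ ballIn A u n, G.Adj y x}

def Linked (X Y : Set V) : Prop :=
  Disjoint X Y ∧ ∃ a ∈ X, ∃ b ∈ Y, G.Adj a b

structure IsCliqueModelList (D : ℕ) (l : List (Set V)) : Prop where
  pairwise : l.Pairwise G.Linked
  center : ∀ X ∈ l, ∃ v ∈ X, X ⊆ G.ballIn X v D

variable {G}

lemma ballIn_zero (A : Set V) (u : V) : G.ballIn A u 0 = {u} := rfl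

lemma ballIn_succ (A : Set V) (u : V) (n : ℕ) :
    G.ballIn A u (n + 1) = G.ballIn A u n ∪ {x | x ∈ A ∧ ∃ y ∈ G.ballIn A u n, G.Adj y x} := rfl

instance (A : Set V) : Std.Symm (G.AdjIn A) := ⟨fun _ _ ⟨hx, hy, h⟩ => ⟨hy, hx, h.symm⟩⟩

lemma mem_ballIn_self (A : Set V) (u : V) : ∀ n, u ∈ G.ballIn A u n
  | 0 => Set.mem_singleton u
  | n + 1 => by rw [ballIn_succ]; exact Or.inl (mem_ballIn_self A u n)

lemma ballIn_subset_ballIn_succ (A : Set V) (u : V) (n : ℕ) :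
    G.ballIn A u n ⊆ G.ballIn A u (n + 1) := by
  rw [ballIn_succ]; exact Set.subset_union_left

lemma ballIn_subset_ballIn_of_le (A : Set V) (u : V) {m n : ℕ} (h : m ≤ n) :
    G.ballIn A u m ⊆ G.ballIn A u n := by
  induction h with
  | refl => rfl
  | step _ ih => exact ih.trans (ballIn_subset_ballIn_succ A u _)

lemma ballIn_subset_ballIn_of_subset {A A' : Set V} (h : A ⊆ A') (u : V) :
    ∀ n, G.ballIn A u n ⊆ G.ballIn A' u n
  | 0 => le_rfl
  | n + 1 => by
    rw [ballIn_succ, ballIn_succ]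
    exact Set.union_subset_union (ballIn_subset_ballIn_of_subset h u n)
      fun _ ⟨hx, y, hy, hadj⟩ => ⟨h hx, y, ballIn_subset_ballIn_of_subset h u n hy, hadj⟩

lemma ballIn_subset {A : Set V} {u : V} (hu : u ∈ A) : ∀ n, G.ballIn A u n ⊆ A
  | 0 => by rw [ballIn_zero]; exact Set.singleton_subset_iff.mpr hu
  | n + 1 => by rw [ballIn_succ]; exact Set.union_subset (ballIn_subset hu n) fun _ hx => hx.1

lemma mem_ballIn_succ_of_adj {A : Set V} {u x y : V} {n : ℕ} (hx : x ∈ G.ballIn A u n)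
    (hy : y ∈ A) (h : G.Adj x y) : y ∈ G.ballIn A u (n + 1) := by
  rw [ballIn_succ]; exact Or.inr ⟨hy, x, hx, h⟩

lemma mem_compIn_self {A : Set V} {u : V} (hu : u ∈ A) : u ∈ G.compIn A u :=
  ⟨Relation.ReflTransGen.refl, hu⟩

lemma compIn_subset (A : Set V) (u : V) : G.compIn A u ⊆ A := fun _ h => h.2

lemma compIn_mono {A A' : Set V} (h : A ⊆ A') (u : V) : G.compIn A u ⊆ G.compIn A' u :=
  fun _ ⟨hr, hx⟩ =>
    ⟨Relation.ReflTransGen.mono (fun _ _ ⟨ha, hb, hadj⟩ => ⟨h ha, h hb, hadj⟩) _ _ hr, h hx⟩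

lemma mem_compIn_of_adj {A : Set V} {u x y : V} (hx : x ∈ G.compIn A u) (hy : y ∈ A)
    (h : G.Adj x y) : y ∈ G.compIn A u :=
  ⟨hx.1.tail ⟨hx.2, hy, h⟩, hy⟩

lemma compIn_eq_of_mem {A : Set V} {u x : V} (hx : x ∈ G.compIn A u) :
    G.compIn A x = G.compIn A u := by
  ext y
  exact ⟨fun ⟨hr, hy⟩ => ⟨hx.1.trans hr, hy⟩,
    fun ⟨hr, hy⟩ => ⟨(symm_of (Relation.ReflTransGen _) hx.1).trans hr, hy⟩⟩

lemma compIn_eq_of_card_lt [Finite V] {A : Set V} {u w : V}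
    (h : Nat.card V < (G.compIn A u).ncard + (G.compIn A w).ncard) :
    G.compIn A u = G.compIn A w := by
  by_contra hne
  have hdisj : Disjoint (G.compIn A u) (G.compIn A w) := Set.disjoint_left.mpr
    fun z hzu hzw => hne ((compIn_eq_of_mem hzu).symm.trans (compIn_eq_of_mem hzw))
  have := Set.ncard_union_eq hdisj
  have := Set.ncard_le_ncard (Set.subset_univ (G.compIn A u ∪ G.compIn A w))
  rw [Set.ncard_univ] at this
  omega

lemma compIn_subset_compIn_of_card_lt [Finite V] {A A' : Set V} (hA : A' ⊆ A) {u w : V}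
    (h : Nat.card V < (G.compIn A' w).ncard + (G.compIn A u).ncard) :
    G.compIn A' w ⊆ G.compIn A u := by
  have hw := compIn_mono (G := G) hA w
  have hle := Set.ncard_le_ncard hw
  have heq : G.compIn A w = G.compIn A u := compIn_eq_of_card_lt (by omega)
  exact heq ▸ hw

lemma compIn_subset_ballIn_of_stable {A : Set V} {u : V} {n : ℕ}
    (h : G.ballIn (G.compIn A u) u (n + 1) ⊆ G.ballIn (G.compIn A u) u n) :
    G.compIn A u ⊆ G.ballIn (G.compIn A u) u n := by
  rintro x ⟨hr, hxA⟩
  induction hr with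
  | refl => exact mem_ballIn_self _ _ n
  | @tail b c hub hbc ih =>
    exact h (mem_ballIn_succ_of_adj (ih hbc.1) (mem_compIn_of_adj ⟨hub, hbc.1⟩ hbc.2.1 hbc.2.2)
      hbc.2.2)

lemma exists_walk_of_mem_ballIn {A : Set V} {u : V} (hu : u ∈ A) :
    ∀ {n : ℕ} {x : V}, x ∈ G.ballIn A u n →
      ∃ (hx : x ∈ A) (w : (G.induce A).Walk ⟨u, hu⟩ ⟨x, hx⟩), w.length ≤ n
  | 0, x, hx => by
    obtain rfl : x = u := hx
    exact ⟨hu, .nil, le_rfl⟩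
  | n + 1, x, hx => by
    rw [ballIn_succ] at hx
    rcases hx with hx | ⟨hxA, y, hy, hadj⟩
    · obtain ⟨hxA, w, hw⟩ := exists_walk_of_mem_ballIn hu hx
      exact ⟨hxA, w, hw.trans n.le_succ⟩
    · obtain ⟨hyA, w, hw⟩ := exists_walk_of_mem_ballIn hu hy
      exact ⟨hxA, w.concat (show (G.induce A).Adj ⟨y, hyA⟩ ⟨x, hxA⟩ from hadj),
        by rw [Walk.length_concat]; omega⟩

lemma reflTransGen_of_walk {A : Set V} {a b : A} (w : (G.induce A).Walk a b) :
    Relation.ReflTransGen (G.AdjIn A) a b := by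
  induction w with
  | nil => exact .refl
  | cons h _ ih => exact .head ⟨Subtype.prop _, Subtype.prop _, h⟩ ih

lemma induce_connected_and_dist_le_of_subset_ballIn {X : Set V} {v : V} {D : ℕ} (hv : v ∈ X)
    (h : X ⊆ G.ballIn X v D) :
    (G.induce X).Connected ∧ ∃ c : X, ∀ y : X, (G.induce X).dist c y ≤ D := by
  have hwalk : ∀ y : X, ∃ w : (G.induce X).Walk ⟨v, hv⟩ y, w.length ≤ D := fun y => by
    obtain ⟨_, w, hw⟩ := exists_walk_of_mem_ballIn hv (h y.2)
    exact ⟨w, hw⟩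
  refine ⟨(connected_iff _).mpr ⟨fun a b => ?_, ⟨⟨v, hv⟩⟩⟩, ⟨v, hv⟩, fun y => ?_⟩
  · exact ((hwalk a).choose.reachable.symm).trans (hwalk b).choose.reachable
  · exact (dist_le (hwalk y).choose).trans (hwalk y).choose_spec

lemma isBalancedSeparator_of_compIn [Finite V] {S : Set V}
    (h : ∀ w ∉ S, 3 * (G.compIn Sᶜ w).ncard ≤ 2 * Nat.card V) : IsBalancedSeparator G S := by
  intro K
  obtain ⟨x, rfl⟩ := K.exists_rep
  have hsub : Subtype.val '' ((G.induce Sᶜ).connectedComponentMk x).supp ⊆ G.compIn Sᶜ x := by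
    rintro _ ⟨y, hy, rfl⟩
    obtain ⟨w⟩ := ConnectedComponent.eq.mp hy
    exact ⟨symm_of (Relation.ReflTransGen _) (reflTransGen_of_walk w), y.2⟩
  rw [← Set.ncard_image_of_injective _ Subtype.val_injective]
  exact (Nat.mul_le_mul_left 3 (Set.ncard_le_ncard hsub)).trans (h x x.2)

lemma exists_path_of_mem_ballIn {A : Set V} {u : V} (hu : u ∈ A) :
    ∀ {n : ℕ} {x : V}, x ∈ G.ballIn A u n →
      ∃ P ⊆ A, u ∈ P ∧ x ∈ P ∧ P.ncard ≤ n + 1 ∧ P ⊆ G.ballIn P u n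
  | 0, x, hx => by
    obtain rfl : x = u := hx
    refine ⟨{x}, Set.singleton_subset_iff.mpr hu, rfl, rfl, by simp, ?_⟩
    rw [ballIn_zero]
  | n + 1, x, hx => by
    rw [ballIn_succ] at hx
    rcases hx with hx | ⟨hxA, y, hy, hadj⟩
    · obtain ⟨P, hPA, huP, hxP, hcard, hball⟩ := exists_path_of_mem_ballIn hu hx
      exact ⟨P, hPA, huP, hxP, by omega, hball.trans (ballIn_subset_ballIn_succ P u n)⟩
    · obtain ⟨P, hPA, huP, hyP, hcard, hball⟩ := exists_path_of_mem_ballIn hu hy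
      have hmono := ballIn_subset_ballIn_of_subset (G := G) (Set.subset_insert x P) u n
      refine ⟨insert x P, Set.insert_subset hxA hPA, Or.inr huP, Or.inl rfl,
        (Set.ncard_insert_le x P).trans (by omega), Set.insert_subset ?_ ?_⟩
      · exact mem_ballIn_succ_of_adj (hmono (hball hyP)) (Or.inl rfl) hadj
      · exact hball.trans (hmono.trans (ballIn_subset_ballIn_succ _ u n))

lemma exists_branchSet {K : Set V} {u : V} (hu : u ∈ K) {r : ℕ} :
    ∀ l : List (Set V), (∀ X ∈ l, ∃ x ∈ G.ballIn K u r, ∃ b ∈ X, G.Adj b x) →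
      ∃ B ⊆ K, u ∈ B ∧ B ⊆ G.ballIn B u r ∧ B.ncard ≤ l.length * (r + 1) + 1 ∧
        ∀ X ∈ l, ∃ x ∈ B, ∃ b ∈ X, G.Adj b x
  | [], _ => ⟨{u}, Set.singleton_subset_iff.mpr hu, rfl,
      Set.singleton_subset_iff.mpr (mem_ballIn_self _ u r), by simp, by simp⟩
  | X :: l, h => by
    obtain ⟨B, hBK, huB, hBball, hBcard, hBadj⟩ :=
      exists_branchSet hu l fun Y hY => h Y (List.mem_cons_of_mem X hY)
    obtain ⟨x, hx, b, hb, hbx⟩ := h X List.mem_cons_self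
    obtain ⟨P, hPK, -, hxP, hPcard, hPball⟩ := exists_path_of_mem_ballIn hu hx
    refine ⟨B ∪ P, Set.union_subset hBK hPK, Or.inl huB, Set.union_subset ?_ ?_, ?_, ?_⟩
    · exact hBball.trans (ballIn_subset_ballIn_of_subset Set.subset_union_left u r)
    · exact hPball.trans (ballIn_subset_ballIn_of_subset Set.subset_union_right u r)
    · have := Set.ncard_union_le B P
      simp only [List.length_cons]
      nlinarith
    · rintro Y (_ | ⟨_, hY⟩)
      · exact ⟨x, Or.inr hxP, b, hb, hbx⟩
      · obtain ⟨y, hy, c, hc, hcy⟩ := hBadj Y hY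
        exact ⟨y, Or.inl hy, c, hc, hcy⟩

lemma mem_ballIn_of_reflTransGen_diff_layer {A : Set V} {u x y : V} (hu : u ∈ A) {j : ℕ}
    (hr : Relation.ReflTransGen (G.AdjIn (A \ (G.ballIn (G.compIn A u) u (j + 1) \
      G.ballIn (G.compIn A u) u j))) x y)
    (hx : x ∈ G.ballIn (G.compIn A u) u j) : y ∈ G.ballIn (G.compIn A u) u j := by
  induction hr with
  | refl => exact hx
  | @tail b c _ hbc ih =>
    have hbK := ballIn_subset (mem_compIn_self hu) j ih
    have hc := mem_ballIn_succ_of_adj ih (mem_compIn_of_adj hbK hbc.2.1.1 hbc.2.2) hbc.2.2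
    by_contra hcj
    exact hbc.2.1.2 ⟨hc, hcj⟩

lemma compIn_diff_layer_subset_or_disjoint {A : Set V} {u : V} (hu : u ∈ A) (j : ℕ) (w : V) :
    G.compIn (A \ (G.ballIn (G.compIn A u) u (j + 1) \ G.ballIn (G.compIn A u) u j)) w ⊆
        G.ballIn (G.compIn A u) u j ∨
      Disjoint (G.compIn (A \ (G.ballIn (G.compIn A u) u (j + 1) \
        G.ballIn (G.compIn A u) u j)) w) (G.ballIn (G.compIn A u) u (j + 1)) := by
  by_cases hz : ∃ z ∈ G.compIn (A \ (G.ballIn (G.compIn A u) u (j + 1) \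
      G.ballIn (G.compIn A u) u j)) w, z ∈ G.ballIn (G.compIn A u) u j
  · obtain ⟨z, hz, hzj⟩ := hz
    left
    intro x hx
    exact mem_ballIn_of_reflTransGen_diff_layer hu
      ((symm_of (Relation.ReflTransGen _) hz.1).trans hx.1) hzj
  · push Not at hz
    right
    refine Set.disjoint_left.mpr fun x hx hx1 => ?_
    exact (compIn_subset _ _ hx).2 ⟨hx1, hz x hx⟩

lemma ballIn_layer_nonempty {A : Set V} {u x : V} {r j : ℕ} (hx : x ∈ G.compIn A u)
    (hxr : x ∉ G.ballIn (G.compIn A u) u r) (hj : j < r) :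
    (G.ballIn (G.compIn A u) u (j + 1) \ G.ballIn (G.compIn A u) u j).Nonempty := by
  by_contra h
  rw [Set.not_nonempty_iff_eq_empty, Set.sdiff_eq_empty] at h
  exact hxr (ballIn_subset_ballIn_of_le _ u hj.le (compIn_subset_ballIn_of_stable h hx))

lemma compIn_compl_eq_of_not_adj {S S' : Set V} {u : V} (hS : S' ⊆ S) (hu : u ∉ S)
    (h : ∀ x ∈ S \ S', ∀ y ∈ G.compIn Sᶜ u, ¬ G.Adj x y) :
    G.compIn S'ᶜ u = G.compIn Sᶜ u := by
  refine (compIn_mono (Set.compl_subset_compl.mpr hS) u).antisymm' ?_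
  rintro x ⟨hr, hx⟩
  induction hr with
  | refl => exact mem_compIn_self hu
  | @tail b c _ hbc ih =>
    have hb := ih hbc.1
    by_cases hcS : c ∈ S
    · exact absurd hbc.2.2.symm (h c ⟨hcS, hbc.2.1⟩ b hb)
    · exact mem_compIn_of_adj hb hcS hbc.2.2

/-- The inner balls cannot keep growing by a factor `1 + 1/ℓ` for `ℓ * E` levels, and once
they hold more than `2n/3` vertices the outer remainders cannot keep shrinking by it either. -/
lemma exists_cheap_layer [Finite V] {K : Set V} {u : V} (hu : u ∈ K) {ℓ E : ℕ} (hℓ : 0 < ℓ)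
    (hE : Nat.card V < 2 ^ E)
    (hlayer : ∀ j < 2 * ℓ * E, (G.ballIn K u (j + 1) \ G.ballIn K u j).Nonempty) :
    ∃ j < 2 * ℓ * E, ∃ P, (P = G.ballIn K u j ∨ P = K \ G.ballIn K u (j + 1)) ∧
      3 * P.ncard ≤ 2 * Nat.card V ∧
      ℓ * (G.ballIn K u (j + 1) \ G.ballIn K u j).ncard ≤ P.ncard := by
  have hlay : ∀ i, (G.ballIn K u (i + 1) \ G.ballIn K u i).ncard + (G.ballIn K u i).ncard =
      (G.ballIn K u (i + 1)).ncard :=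
    fun i => Set.ncard_sdiff_add_ncard_of_subset (ballIn_subset_ballIn_succ K u i)
  have htail : ∀ i, (K \ G.ballIn K u i).ncard + (G.ballIn K u i).ncard = K.ncard :=
    fun i => Set.ncard_sdiff_add_ncard_of_subset (ballIn_subset hu i)
  have hK : K.ncard ≤ Nat.card V := Set.ncard_le_card K
  have hball : ∀ i, (G.ballIn K u i).ncard ≤ K.ncard := fun i => by linarith [htail i]
  obtain ⟨j₁, hj₁, h₁⟩ := exists_mul_succ_le_of_lt_two_pow (b := fun i => (G.ballIn K u i).ncard)
    (E := E) hℓ (by simp [ballIn_zero]) (by linarith [hball (ℓ * E)])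
  by_cases hinner : 3 * (G.ballIn K u j₁).ncard ≤ 2 * Nat.card V
  · refine ⟨j₁, by nlinarith, _, Or.inl rfl, hinner, ?_⟩
    nlinarith [hlay j₁]
  have houter : 0 < (K \ G.ballIn K u (j₁ + ℓ * E)).ncard := by
    obtain ⟨x, hx1, hx⟩ := hlayer (j₁ + ℓ * E) (by nlinarith)
    exact (Set.ncard_pos).mpr ⟨x, ballIn_subset hu _ hx1, hx⟩
  obtain ⟨j, hj₁j, hj, h⟩ := exists_mul_le_succ_of_lt_two_pow
    (T := fun i => (K \ G.ballIn K u i).ncard) hℓ houter (by linarith [htail j₁])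
  refine ⟨j, by nlinarith, _, Or.inr rfl, ?_, ?_⟩
  · have := Set.ncard_le_ncard (ballIn_subset_ballIn_of_le (G := G) K u (show j₁ ≤ j + 1 by omega))
    linarith [htail (j + 1)]
  · nlinarith [htail j, htail (j + 1), hlay j]

end SimpleGraph

namespace CliqueModel

variable {V : Type u} {G : SimpleGraph V}

def ofList {D : ℕ} {l : List (Set V)} (h : G.IsCliqueModelList D l) :
    CliqueModel G l.length D where
  B i := l.get i
  disj i j hij := by
    have hget := List.pairwise_iff_get.mp h.pairwise
    rcases lt_or_gt_of_ne hij with h' | h'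
    · exact (hget i j h').1
    · exact (hget j i h').1.symm
  conn i := by
    obtain ⟨v, hv, hb⟩ := h.center _ (List.get_mem l i)
    exact (SimpleGraph.induce_connected_and_dist_le_of_subset_ballIn hv hb).1
  rad i := by
    obtain ⟨v, hv, hb⟩ := h.center _ (List.get_mem l i)
    exact (SimpleGraph.induce_connected_and_dist_le_of_subset_ballIn hv hb).2
  adj i j hij := (List.pairwise_iff_get.mp h.pairwise i j hij).2

lemma support_ofList {D : ℕ} {l : List (Set V)} (h : G.IsCliqueModelList D l) :
    (ofList h).support = ⋃ X ∈ l, X := by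
  ext x
  simp only [support, ofList, Set.mem_iUnion, exists_prop]
  constructor
  · rintro ⟨i, hi⟩
    exact ⟨l.get i, List.get_mem l i, hi⟩
  · rintro ⟨X, hX, hx⟩
    obtain ⟨i, rfl⟩ := List.get_of_mem hX
    exact ⟨i, hx⟩

lemma le_card [Finite V] {m d : ℕ} (M : CliqueModel G m d) : m ≤ Nat.card V := by
  have hne : ∀ i, (M.B i).Nonempty := fun i => ⟨_, (M.rad i).choose.2⟩
  choose f hf using hne
  have hinj : Function.Injective f := fun i j hij => by
    by_contra hne
    exact Set.disjoint_left.mp (M.disj i j hne) (hf i) (hij ▸ hf j)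
  simpa using Nat.card_le_card_of_injective f hinj

lemma le_omegaDepth [Finite V] {m d : ℕ} (M : CliqueModel G m d) : m ≤ omegaDepth G d :=
  le_csSup ⟨Nat.card V, fun _ h => h.some.le_card⟩ ⟨M⟩

end CliqueModel

namespace CliqueSeparator

open SimpleGraph

variable {V : Type*} (G : SimpleGraph V) (ℓ m₀ D : ℕ)

def Outcome : Prop :=
  (∃ M : CliqueModel G m₀ D, M.Bounded m₀) ∨
  (∃ (C M : Finset V) (m : ℕ) (Mod : CliqueModel G m D),
    Disjoint C M ∧
    IsBalancedSeparator G (↑C ∪ ↑M) ∧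
    (C.card : ℝ) ≤ (Nat.card V : ℝ) / ℓ ∧
    m ≤ min m₀ (omegaDepth G D) ∧
    Mod.support = ↑M ∧
    Mod.Bounded (min m₀ (omegaDepth G D)))

def removed (C : Set V) (l : List (Set V)) : Set V := C ∪ ⋃ X ∈ l, X

structure IsState (C : Set V) (l : List (Set V)) : Prop where
  model : G.IsCliqueModelList D l
  disjoint : ∀ X ∈ l, Disjoint X C
  bounded : ∀ X ∈ l, X.ncard ≤ min m₀ (omegaDepth G D) * D
  length_lt : l.length < m₀

def IsBig (A : Set V) (w : V) : Prop := 2 * Nat.card V < 3 * (G.compIn A w).ncard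

/-- Each cut vertex is charged `ℓ + 1`; the charge is paid by vertices leaving the big
component, so `ℓ * |C| ≤ n` survives until no big component is left. -/
def WithinBudget (C : Set V) (l : List (Set V)) (w : V) : Prop :=
  (ℓ + 1) * C.ncard + (⋃ X ∈ l, X).ncard + (G.compIn (removed C l)ᶜ w).ncard ≤ Nat.card V

def Advances (k : ℕ) (C : Set V) (l : List (Set V)) : Prop :=
  IsState G m₀ D C l ∧ ℓ * C.ncard ≤ Nat.card V ∧
    ∀ w ∉ removed C l, IsBig G (removed C l)ᶜ w →
      WithinBudget G ℓ C l w ∧ (G.compIn (removed C l)ᶜ w).ncard < k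

variable {G ℓ m₀ D}

lemma removed_cons (C B : Set V) (l : List (Set V)) :
    removed C (B :: l) = removed C l ∪ B := by
  ext x
  simp only [removed, List.mem_cons, Set.iUnion_iUnion_eq_or_left, Set.mem_union]
  tauto

lemma outcome_of_length_eq {l : List (Set V)} (hl : G.IsCliqueModelList D l)
    (hlen : l.length = m₀) (hsize : ∀ X ∈ l, X.ncard ≤ m₀ * D) : Outcome G ℓ m₀ D := by
  subst hlen
  exact Or.inl ⟨CliqueModel.ofList hl, fun i => hsize _ (List.get_mem l i)⟩

variable [Finite V]

lemma outcome_of_not_isBig (hℓ : 0 < ℓ) {C : Set V} {l : List (Set V)}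
    (hs : IsState G m₀ D C l) (hC : ℓ * C.ncard ≤ Nat.card V)
    (hsmall : ∀ w ∉ removed C l, ¬ IsBig G (removed C l)ᶜ w) : Outcome G ℓ m₀ D := by
  right
  refine ⟨(Set.toFinite C).toFinset, (Set.toFinite (⋃ X ∈ l, X)).toFinset, l.length,
    CliqueModel.ofList hs.model, ?_, ?_, ?_, ?_, ?_, ?_⟩
  · simp only [Set.Finite.disjoint_toFinset, Set.disjoint_iUnion_right]
    exact fun X hX => (hs.disjoint X hX).symm
  · rw [Set.Finite.coe_toFinset, Set.Finite.coe_toFinset]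
    exact isBalancedSeparator_of_compIn (S := removed C l) fun w hw => by
      have := hsmall w hw
      rw [IsBig] at this
      omega
  · rw [← Set.ncard_eq_toFinset_card C, le_div_iff₀ (by exact_mod_cast hℓ)]
    exact_mod_cast (mul_comm _ _).trans_le hC
  · exact le_min hs.length_lt.le (CliqueModel.ofList hs.model).le_omegaDepth
  · rw [CliqueModel.support_ofList, Set.Finite.coe_toFinset]
  · exact fun i => hs.bounded _ (List.get_mem l i)

lemma compIn_subset_of_isBig {S S' : Set V} (hS : S ⊆ S') {u w : V} (hw : IsBig G S'ᶜ w)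
    (hu : IsBig G Sᶜ u) : G.compIn S'ᶜ w ⊆ G.compIn Sᶜ u :=
  compIn_subset_compIn_of_card_lt (Set.compl_subset_compl.mpr hS) (by
    unfold IsBig at hw hu
    omega)

lemma exists_prune {C : Set V} {l : List (Set V)} {u : V} (hs : IsState G m₀ D C l)
    (hu : u ∉ removed C l) :
    ∃ l', IsState G m₀ D C l' ∧ u ∉ removed C l' ∧
      G.compIn (removed C l')ᶜ u = G.compIn (removed C l)ᶜ u ∧
      (⋃ X ∈ l', X).ncard ≤ (⋃ X ∈ l, X).ncard ∧
      ∀ X ∈ l', ∃ x ∈ G.compIn (removed C l)ᶜ u, ∃ b ∈ X, G.Adj b x := by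
  set l' := l.filter fun X => decide (∃ x ∈ G.compIn (removed C l)ᶜ u, ∃ b ∈ X, G.Adj b x)
  have hsub : l'.Sublist l := List.filter_sublist
  have hmem : ∀ X ∈ l', X ∈ l := fun X hX => hsub.subset hX
  have hU : (⋃ X ∈ l', X) ⊆ ⋃ X ∈ l, X := Set.biUnion_subset_biUnion_left hmem
  have hR : removed C l' ⊆ removed C l := Set.union_subset_union_right C hU
  refine ⟨l', ⟨⟨hs.model.pairwise.sublist hsub, fun X hX => hs.model.center X (hmem X hX)⟩,
    fun X hX => hs.disjoint X (hmem X hX), fun X hX => hs.bounded X (hmem X hX),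
    hsub.length_le.trans_lt hs.length_lt⟩, fun h => hu (hR h), ?_, Set.ncard_le_ncard hU,
    fun X hX => by simpa [l'] using (List.mem_filter.mp hX).2⟩
  refine compIn_compl_eq_of_not_adj hR hu fun x ⟨hxS, hxS'⟩ y hy hxy => hxS' ?_
  rcases hxS with hxC | hxl
  · exact Or.inl hxC
  · obtain ⟨X, hX, hxX⟩ := Set.mem_iUnion₂.mp hxl
    refine Or.inr (Set.mem_iUnion₂.mpr ⟨X, List.mem_filter.mpr ⟨hX, ?_⟩, hxX⟩)
    exact decide_eq_true ⟨y, hy, x, hxX, hxy⟩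

/-- Shortest paths from `u` form the new branch set. -/
lemma outcome_or_advances_of_forall_near (hD : 0 < D) {C : Set V} {l : List (Set V)} {u : V}
    (hs : IsState G m₀ D C l) (hu : u ∉ removed C l) (hbig : IsBig G (removed C l)ᶜ u)
    (hbudget : WithinBudget G ℓ C l u)
    (hnear : ∀ X ∈ l, ∃ x ∈ G.ballIn (G.compIn (removed C l)ᶜ u) u (D - 1), ∃ b ∈ X, G.Adj b x) :
    Outcome G ℓ m₀ D ∨ ∃ B, Advances G ℓ m₀ D (G.compIn (removed C l)ᶜ u).ncard C (B :: l) := by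
  unfold WithinBudget at hbudget
  set K := G.compIn (removed C l)ᶜ u
  have huK : u ∈ K := mem_compIn_self hu
  obtain ⟨B, hBK, huB, hBball, hBcard, hBadj⟩ := exists_branchSet huK l hnear
  have hBS : Disjoint B (removed C l) :=
    Set.disjoint_left.mpr fun x hx => compIn_subset _ _ (hBK hx)
  have hmodel : G.IsCliqueModelList D (B :: l) := by
    refine ⟨List.pairwise_cons.mpr ⟨fun X hX => ⟨hBS.mono_right ?_, ?_⟩, hs.model.pairwise⟩, ?_⟩
    · exact Set.subset_union_of_subset_right (Set.subset_biUnion_of_mem (u := id) hX) C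
    · obtain ⟨x, hx, b, hb, hbx⟩ := hBadj X hX
      exact ⟨x, hx, b, hb, hbx.symm⟩
    · rintro X (_ | ⟨_, hX⟩)
      · exact ⟨u, huB, hBball.trans (ballIn_subset_ballIn_of_le B u (Nat.sub_le D 1))⟩
      · exact hs.model.center X hX
  have hcap : l.length + 1 ≤ min m₀ (omegaDepth G D) :=
    le_min hs.length_lt (CliqueModel.ofList hmodel).le_omegaDepth
  have hsize : ∀ X ∈ B :: l, X.ncard ≤ min m₀ (omegaDepth G D) * D := by
    rintro X (_ | ⟨_, hX⟩)
    · rw [Nat.sub_add_cancel hD] at hBcard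
      nlinarith
    · exact hs.bounded X hX
  by_cases hfull : l.length + 1 = m₀
  · exact Or.inl (outcome_of_length_eq hmodel hfull fun X hX =>
      (hsize X hX).trans (Nat.mul_le_mul_right D (min_le_left _ _)))
  refine Or.inr ⟨B, ⟨hmodel, ?_, hsize, by simp only [List.length_cons]; omega⟩, ?_, ?_⟩
  · rintro X (_ | ⟨_, hX⟩)
    · exact hBS.mono_right Set.subset_union_left
    · exact hs.disjoint X hX
  · nlinarith
  intro w hw hwbig
  rw [removed_cons] at hw hwbig ⊢
  have hK' : G.compIn (removed C l ∪ B)ᶜ w ⊆ K :=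
    compIn_subset_of_isBig Set.subset_union_left hwbig hbig
  have hdisj : Disjoint B (G.compIn (removed C l ∪ B)ᶜ w) :=
    Set.disjoint_right.mpr fun x hx hxB => compIn_subset _ _ hx (Or.inr hxB)
  have hsum := Set.ncard_union_eq hdisj
  have hle := Set.ncard_le_ncard (Set.union_subset hBK hK')
  have hB1 : 0 < B.ncard := (Set.ncard_pos).mpr ⟨u, huB⟩
  have hU : (⋃ X ∈ B :: l, X).ncard ≤ B.ncard + (⋃ X ∈ l, X).ncard := by
    simpa only [List.mem_cons, Set.iUnion_iUnion_eq_or_left] using Set.ncard_union_le _ _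
  unfold WithinBudget
  rw [removed_cons]
  omega

/-- Cutting a cheap layer `L`: the big component left over lies on the side opposite to `P`, and
the charge `ℓ |L|` is paid by `P`. -/
lemma advances_of_cheap_layer {C : Set V} {l : List (Set V)} {u : V} (hs : IsState G m₀ D C l)
    (hu : u ∉ removed C l) (hbig : IsBig G (removed C l)ᶜ u) (hbudget : WithinBudget G ℓ C l u)
    {K L P : Set V} {j : ℕ} (hK : K = G.compIn (removed C l)ᶜ u)
    (hL : L = G.ballIn K u (j + 1) \ G.ballIn K u j) (hLne : L.Nonempty)
    (hP : P = G.ballIn K u j ∨ P = K \ G.ballIn K u (j + 1))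
    (hPsmall : 3 * P.ncard ≤ 2 * Nat.card V) (hcheap : ℓ * L.ncard ≤ P.ncard) :
    Advances G ℓ m₀ D K.ncard (C ∪ L) l := by
  unfold WithinBudget at hbudget
  rw [← hK] at hbudget
  have huK : u ∈ K := hK ▸ mem_compIn_self hu
  have hLK : L ⊆ K := hL ▸ fun x hx => ballIn_subset huK (j + 1) hx.1
  have hKS : Disjoint K (removed C l) := hK ▸ Set.disjoint_left.mpr fun x hx => compIn_subset _ _ hx
  have hrem : removed (C ∪ L) l = removed C l ∪ L := by
    ext x
    simp only [removed, Set.mem_union]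
    tauto
  have hlay := Set.ncard_sdiff_add_ncard_of_subset (ballIn_subset_ballIn_succ (G := G) K u j)
  have htail := Set.ncard_sdiff_add_ncard_of_subset (ballIn_subset (G := G) huK (j + 1))
  have hPK : P.ncard ≤ K.ncard := by
    rcases hP with rfl | rfl
    · exact Set.ncard_le_ncard (ballIn_subset huK j)
    · exact Set.ncard_le_ncard Set.sdiff_subset
  have hCL : (ℓ + 1) * (C ∪ L).ncard ≤ (ℓ + 1) * C.ncard + ℓ * L.ncard + L.ncard := by
    nlinarith [Set.ncard_union_le C L]
  refine ⟨⟨hs.model, fun X hX => Set.disjoint_union_right.mpr ⟨hs.disjoint X hX, ?_⟩,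
    hs.bounded, hs.length_lt⟩, by nlinarith, ?_⟩
  · refine (hKS.mono_left hLK).symm.mono_left ?_
    exact Set.subset_union_of_subset_right (Set.subset_biUnion_of_mem (u := id) hX) C
  intro w hw hwbig
  rw [hrem] at hw hwbig ⊢
  have hK' : G.compIn (removed C l ∪ L)ᶜ w ⊆ K :=
    hK ▸ compIn_subset_of_isBig Set.subset_union_left hwbig hbig
  have hside : (G.compIn (removed C l ∪ L)ᶜ w).ncard ≤ (G.ballIn K u j).ncard ∨
      (G.compIn (removed C l ∪ L)ᶜ w).ncard ≤ (K \ G.ballIn K u (j + 1)).ncard := by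
    have hA : (removed C l ∪ L)ᶜ = (removed C l)ᶜ \ L := by rw [Set.compl_union, Set.sdiff_eq]
    have h := compIn_diff_layer_subset_or_disjoint (G := G) (show u ∈ (removed C l)ᶜ from hu) j w
    rw [← hK, ← hL, ← hA] at h
    rcases h with h | h
    · exact Or.inl (Set.ncard_le_ncard h)
    · exact Or.inr (Set.ncard_le_ncard (Set.subset_sdiff.mpr ⟨hK', h⟩))
  have hL1 : 0 < L.ncard := (Set.ncard_pos).mpr hLne
  unfold IsBig at hwbig
  unfold WithinBudget
  rw [hrem]
  rcases hP with rfl | rfl <;> rcases hside with h | h <;> rw [← hL] at hlay <;> omega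

lemma outcome_or_exists_advances (hℓ : 0 < ℓ) {E : ℕ} (hE : Nat.card V < 2 ^ E)
    (hD : 2 * ℓ * E < D) {C : Set V} {l : List (Set V)} {u : V} (hs : IsState G m₀ D C l)
    (hu : u ∉ removed C l) (hbig : IsBig G (removed C l)ᶜ u) (hbudget : WithinBudget G ℓ C l u)
    (htouch : ∀ X ∈ l, ∃ x ∈ G.compIn (removed C l)ᶜ u, ∃ b ∈ X, G.Adj b x) :
    Outcome G ℓ m₀ D ∨ ∃ C' l', Advances G ℓ m₀ D (G.compIn (removed C l)ᶜ u).ncard C' l' := by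
  by_cases hnear : ∀ X ∈ l, ∃ x ∈ G.ballIn (G.compIn (removed C l)ᶜ u) u (D - 1),
      ∃ b ∈ X, G.Adj b x
  · rcases outcome_or_advances_of_forall_near (by omega) hs hu hbig hbudget hnear with
      h | ⟨B, h⟩
    · exact Or.inl h
    · exact Or.inr ⟨C, B :: l, h⟩
  push Not at hnear
  obtain ⟨X, hX, hfar⟩ := hnear
  obtain ⟨x, hxK, b, hb, hbx⟩ := htouch X hX
  have hlayer := fun j (hj : j < D - 1) =>
    ballIn_layer_nonempty hxK (fun h => hfar x h b hb hbx) hj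
  obtain ⟨j, hj, P, hP, hPsmall, hcheap⟩ :=
    exists_cheap_layer (mem_compIn_self hu) hℓ hE fun j hj => hlayer j (by omega)
  exact Or.inr ⟨_, l, advances_of_cheap_layer hs hu hbig hbudget rfl rfl
    (hlayer j (by omega)) hP hPsmall hcheap⟩

lemma outcome_of_isBig (hℓ : 0 < ℓ) {E : ℕ} (hE : Nat.card V < 2 ^ E) (hD : 2 * ℓ * E < D) :
    ∀ (C : Set V) (l : List (Set V)) (u : V), IsState G m₀ D C l → u ∉ removed C l →
      IsBig G (removed C l)ᶜ u → WithinBudget G ℓ C l u → Outcome G ℓ m₀ D := by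
  intro C l u
  induction hk : (G.compIn (removed C l)ᶜ u).ncard using Nat.strong_induction_on
    generalizing C l u with
  | _ k IH =>
  intro hs hu hbig hbudget
  obtain ⟨l', hs', hu', hK, hU, htouch⟩ := exists_prune hs hu
  rw [← hK] at htouch hk
  replace hbig : IsBig G (removed C l')ᶜ u := by rwa [IsBig, hK]
  have hbudget' : WithinBudget G ℓ C l' u := by
    unfold WithinBudget at hbudget ⊢
    rw [hK]
    omega
  rcases outcome_or_exists_advances hℓ hE hD hs' hu' hbig hbudget' htouch with
    h | ⟨C', l'', hs'', hC'', hnext⟩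
  · exact h
  by_cases hbig'' : ∃ w ∉ removed C' l'', IsBig G (removed C' l'')ᶜ w
  · obtain ⟨w, hw, hwbig⟩ := hbig''
    obtain ⟨hwb, hlt⟩ := hnext w hw hwbig
    exact IH _ (hk ▸ hlt) C' l'' w rfl hs'' hw hwbig hwb
  · push Not at hbig''
    exact outcome_of_not_isBig hℓ hs'' hC'' hbig''

theorem outcome (hℓ : 0 < ℓ) (hm₀ : 0 < m₀) {E : ℕ} (hE : Nat.card V < 2 ^ E)
    (hD : 2 * ℓ * E < D) : Outcome G ℓ m₀ D := by
  have hs : IsState G m₀ D ∅ [] := ⟨⟨List.Pairwise.nil, by simp⟩, by simp, by simp, hm₀⟩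
  by_cases hbig : ∃ u ∉ removed (∅ : Set V) [], IsBig G (removed ∅ [])ᶜ u
  · obtain ⟨u, hu, hbig⟩ := hbig
    refine outcome_of_isBig hℓ hE hD ∅ [] u hs hu hbig ?_
    simp [WithinBudget, Set.ncard_le_card]
  · push Not at hbig
    exact outcome_of_not_isBig hℓ hs (by simp) hbig

end CliqueSeparator

lemma one_le_logb_two_succ {n : ℕ} (hn : 1 ≤ n) : 1 ≤ Real.logb 2 (n + 1) := by
  rw [Real.le_logb_iff_rpow_le (by norm_num) (by positivity), Real.rpow_one]
  exact_mod_cast Nat.succ_le_succ hn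

lemma clog_two_succ_le_two_mul_logb {n : ℕ} (hn : 1 ≤ n) :
    (Nat.clog 2 (n + 1) : ℝ) ≤ 2 * Real.logb 2 (n + 1) := by
  have hlog := one_le_logb_two_succ hn
  have hceil : (Nat.clog 2 (n + 1) : ℝ) < Real.logb 2 (n + 1) + 1 := by
    rw [← Real.natCeil_logb_natCast]
    push_cast
    exact Nat.ceil_lt_add_one (by linarith)
  linarith

/-- Plotkin–Rao–Smith, Theorem 1. -/
theorem stmt0 :
    ∃ (a : ℝ) (d : ℕ → ℕ → ℕ), 0 < a ∧
      (∀ ℓ ℓ' n n' : ℕ, ℓ ≤ ℓ' → n ≤ n' → d ℓ n ≤ d ℓ' n') ∧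
      (∀ ℓ n : ℕ, 1 ≤ ℓ → 1 ≤ n → (d ℓ n : ℝ) ≤ a * ℓ * Real.logb 2 (n + 1)) ∧
      (∀ (V : Type) [Fintype V] (G : SimpleGraph V) (n ℓ m₀ : ℕ),
        Fintype.card V = n → 1 ≤ ℓ → 1 ≤ m₀ →
        (∃ M : CliqueModel G m₀ (d ℓ n), M.Bounded m₀) ∨
        (∃ (C M : Finset V) (m : ℕ) (Mod : CliqueModel G m (d ℓ n)),
          Disjoint C M ∧
          IsBalancedSeparator G (↑C ∪ ↑M) ∧
          (C.card : ℝ) ≤ (n : ℝ) / ℓ ∧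
          m ≤ min m₀ (omegaDepth G (d ℓ n)) ∧
          Mod.support = ↑M ∧
          Mod.Bounded (min m₀ (omegaDepth G (d ℓ n))))) := by
  refine ⟨5, fun ℓ n => 2 * ℓ * Nat.clog 2 (n + 1) + 1, by norm_num, ?_, ?_, ?_⟩
  · intro ℓ ℓ' n n' hℓ hn
    have := Nat.clog_mono_right 2 (Nat.succ_le_succ hn)
    dsimp only
    gcongr
  · intro ℓ n hℓ hn
    have hclog := clog_two_succ_le_two_mul_logb hn
    have hlog := one_le_logb_two_succ hn
    have hℓ' : (1 : ℝ) ≤ ℓ := by exact_mod_cast hℓ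
    push_cast
    nlinarith
  · intro V _ G n ℓ m₀ hcard hℓ hm₀
    subst hcard
    have hE : Nat.card V < 2 ^ Nat.clog 2 (Fintype.card V + 1) := by
      rw [Nat.card_eq_fintype_card]
      exact Nat.le_pow_clog (by norm_num) _
    have := CliqueSeparator.outcome (G := G) hℓ hm₀ hE (Nat.lt_succ_self _)
    rwa [CliqueSeparator.Outcome, Nat.card_eq_fintype_card] at this
end

section
/- Let n ≥ 2 be an integer and let G be the star K_{1,n−1} with center u and n−1 leaves. Define a cost function q on V(G) by q(u) = 1/4 and q(v) = 3/(4(n−1)) for every leaf v. Then every balanced separator Z of G satisfies q(Z) ≥ 1/4. -/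
open scoped Classical

universe u

/-- in the star `K_{1,n-1}` with cost `1/4` on the center and
`3/(4(n-1))` on each leaf, every balanced separator has cost at least `1/4`. -/
theorem stmt8 (n : ℕ) (hn : 2 ≤ n) {V : Type} [Fintype V] [DecidableEq V]
    (hcard : Fintype.card V = n) (u : V) (G : SimpleGraph V)
    (hG : ∀ v w : V, G.Adj v w ↔ (v ≠ w ∧ (v = u ∨ w = u)))
    (q : V → ℚ) (hqu : q u = 1 / 4)
    (hql : ∀ v : V, v ≠ u → q v = 3 / (4 * ((n : ℚ) - 1)))
    (Z : Finset V) (hZ : IsBalancedSeparator G (↑Z : Set V)) :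
    (1 : ℚ) / 4 ≤ ∑ v ∈ Z, q v := by
  have hn1 : (1:ℚ) ≤ (n:ℚ) - 1 := by
    have : (2:ℚ) ≤ (n:ℚ) := by exact_mod_cast hn
    linarith
  have hqnn : ∀ v : V, 0 ≤ q v := by
    intro v
    by_cases hv : v = u
    · rw [hv, hqu]; norm_num
    · rw [hql v hv]; positivity
  by_cases hu : u ∈ Z
  · calc (1:ℚ)/4 = q u := (hqu).symm
      _ ≤ ∑ v ∈ Z, q v := Finset.single_le_sum (fun v _ => hqnn v) hu
  · -- u is outside Z; its component in G - Z is all of Zᶜ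
    have huc : u ∈ (↑Z : Set V)ᶜ := hu
    set K := (G.induce (↑Z : Set V)ᶜ).connectedComponentMk ⟨u, huc⟩ with hK
    have hsupp : K.supp = Set.univ := by
      ext ⟨v, hv⟩
      simp only [SimpleGraph.ConnectedComponent.mem_supp_iff, Set.mem_univ, iff_true, hK]
      apply SimpleGraph.ConnectedComponent.sound
      by_cases hvu : v = u
      · subst hvu; rfl
      · apply SimpleGraph.Adj.reachable
        show G.Adj v u
        rw [hG]
        exact ⟨hvu, Or.inr rfl⟩
    have hcard2 : K.supp.ncard = n - Z.card := by
      rw [hsupp, Set.ncard_univ, Nat.card_eq_fintype_card]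
      have : Fintype.card ↥((↑Z : Set V)ᶜ) = Fintype.card V - Z.card := by
        rw [Fintype.card_compl_set]
        simp
      rw [this, hcard]
    have hZle : Z.card ≤ n := by
      rw [← hcard]
      simpa using Finset.card_le_univ Z
    have hbal := hZ K
    rw [hcard2, Nat.card_eq_fintype_card, hcard] at hbal
    have hn3 : n ≤ 3 * Z.card := by omega
    have hsum : ∑ v ∈ Z, q v = (Z.card : ℚ) * (3 / (4 * ((n : ℚ) - 1))) := by
      rw [Finset.sum_congr rfl (fun v hv => hql v (by rintro rfl; exact hu hv))]
      simp [mul_comm]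
    rw [hsum]
    have hz : (n:ℚ) ≤ 3 * (Z.card : ℚ) := by exact_mod_cast hn3
    rw [← mul_div_assoc, div_le_div_iff₀ (by norm_num) (by linarith)]
    nlinarith [hz, hn1]
end

section
/- Let t ≥ 0 be a real number and let k : ℕ × ℕ → ℕ be a non-decreasing function such that k(ℓ,n) ≤ b·(ℓ·log₂² n)^t for all ℓ ≥ 1 and n ≥ 2, for some constant b > 0. Then there exists a real number c > 0 with the following property: if a finite simple graph G on n ≥ 2 vertices is fractionally k-treewidth-fragile and H is a subgraph of G with m vertices where m ≥ (log₂ n)^{4t}, then H has a balanced separator of order at most c·m^{1−1/(2t+2)}. -/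
open scoped Classical

universe u

/-!
Draw `X` from the `1/ℓ`-thin distribution on `coTW_{k(ℓ,n)}(G)` with `ℓ = ⌈m^{1/(2t+2)}⌉`. On
average `X` meets `V(H)` in at most `m/ℓ ≤ m^{1-1/(2t+2)}` vertices, so some `X` does. In `G - X`,
weight the vertices of `H` and take a node of the decomposition tree at which no branch carries
more than half of the weight (a weighted centroid, which exists in any tree); its bag, of size at
most `k(ℓ,n) + 1`, leaves components with at most `m/2` vertices of `H`. The bound
`k(ℓ,n) ≤ b(ℓ log² n)^t` together with `log^{4t} n ≤ m` gives `k(ℓ,n) ≤ b 2^t m^{1-1/(2t+2)}`.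
-/

namespace SimpleGraph

variable {ι : Type*} {T : SimpleGraph ι}

/-- The vertex set of the component of `T - c` containing `y` (empty when `y = c`). -/
def branch (T : SimpleGraph ι) (c y : ι) : Set ι := {w | ∃ p : T.Walk y w, c ∉ p.support}

lemma not_mem_branch_self (c y : ι) : c ∉ T.branch c y := fun ⟨p, hp⟩ => hp p.end_mem_support

lemma mem_branch_self {c y : ι} (h : y ≠ c) : y ∈ T.branch c y :=
  ⟨Walk.nil, by simpa using h.symm⟩

lemma mem_branch_comm {c y w : ι} : w ∈ T.branch c y ↔ y ∈ T.branch c w :=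
  ⟨fun ⟨p, hp⟩ => ⟨p.reverse, by simpa using hp⟩, fun ⟨p, hp⟩ => ⟨p.reverse, by simpa using hp⟩⟩

lemma branch_subset_of_mem {c y w : ι} (h : w ∈ T.branch c y) : T.branch c w ⊆ T.branch c y := by
  rintro x ⟨q, hq⟩
  obtain ⟨p, hp⟩ := h
  exact ⟨p.append q, by rw [Walk.mem_support_append_iff]; tauto⟩

lemma branch_eq_of_mem {c y w : ι} (h : w ∈ T.branch c y) : T.branch c w = T.branch c y :=
  (branch_subset_of_mem h).antisymm (branch_subset_of_mem (mem_branch_comm.1 h))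

lemma branch_eq_of_mem_of_mem {c x y w : ι} (hx : w ∈ T.branch c x) (hy : w ∈ T.branch c y) :
    T.branch c x = T.branch c y :=
  (branch_eq_of_mem hx).symm.trans (branch_eq_of_mem hy)

lemma mem_branch_of_adj {c y u u' : ι} (hu : u ∈ T.branch c y) (h : T.Adj u u') (hc : u' ≠ c) :
    u' ∈ T.branch c y := by
  have huc : u ≠ c := fun huc => not_mem_branch_self c y (huc ▸ hu)
  exact branch_subset_of_mem hu ⟨h.toWalk, by simp [huc.symm, hc.symm]⟩

lemma Connected.mem_branch_or_mem_branch (hT : T.Connected) {z z' : ι} (hzz' : z ≠ z') (w : ι) :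
    w ∈ T.branch z z' ∨ w ∈ T.branch z' z := by
  have step : ∀ {a b : ι}, T.Adj a b → a ∈ T.branch z z' ∪ T.branch z' z →
      b ∈ T.branch z z' ∪ T.branch z' z := by
    rintro a b hab (ha | ha)
    · by_cases hb : b = z
      · rw [hb]; exact .inr (mem_branch_self hzz')
      · exact .inl (mem_branch_of_adj ha hab hb)
    · by_cases hb : b = z'
      · rw [hb]; exact .inl (mem_branch_self hzz'.symm)
      · exact .inr (mem_branch_of_adj ha hab hb)
  have closed : ∀ {a : ι} (p : T.Walk a w), a ∈ T.branch z z' ∪ T.branch z' z →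
      w ∈ T.branch z z' ∪ T.branch z' z := by
    intro a p
    induction p with
    | nil => exact id
    | cons hab _ ih => exact fun ha => ih (step hab ha)
  exact closed (hT.preconnected z' w).some (.inl (mem_branch_self hzz'.symm))

lemma IsAcyclic.disjoint_branch_of_adj (hT : T.IsAcyclic) {z z' : ι} (h : T.Adj z z') :
    Disjoint (T.branch z z') (T.branch z' z) := by
  refine Set.disjoint_left.2 fun w ⟨p, hp⟩ ⟨q, hq⟩ => ?_
  have he := isBridge_iff_forall_walk_mem_edges.1 (isAcyclic_iff_forall_adj_isBridge.1 hT h)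
    (q.append p.reverse)
  rw [Walk.edges_append, List.mem_append, Walk.edges_reverse, List.mem_reverse] at he
  rcases he with he | he
  · exact hq (q.snd_mem_support_of_mem_edges he)
  · exact hp (p.fst_mem_support_of_mem_edges he)

lemma IsTree.branch_subset_of_adj (hT : T.IsTree) {z z' y : ι} (h : T.Adj z z')
    (hz : z ∉ T.branch z' y) : T.branch z' y ⊆ T.branch z z' \ {z'} := by
  intro x hx
  refine ⟨(hT.connected.mem_branch_or_mem_branch h.ne x).resolve_right fun hx' => hz ?_,
    fun hxz' => not_mem_branch_self z' y (by rwa [hxz'] at hx)⟩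
  rw [branch_eq_of_mem_of_mem hx hx']
  exact mem_branch_self h.ne

lemma exists_adj_mem_branch {z x y : ι} (q : T.Walk z x) (hx : x ∈ T.branch z y) :
    ∃ z' ∈ q.support, T.Adj z z' ∧ T.branch z z' = T.branch z y := by
  have hzx : z ≠ x := by rintro rfl; exact not_mem_branch_self z y hx
  obtain ⟨z', hadj, tail, hq⟩ := Walk.exists_eq_cons_of_ne hzx q.toPath.1
  have hpath := q.toPath.2
  rw [hq, Walk.cons_isPath_iff] at hpath
  refine ⟨z', q.support_toPath_subset_support ?_, hadj, branch_eq_of_mem_of_mem ⟨tail, hpath.2⟩ hx⟩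
  rw [hq]
  simp

open Finset in
lemma IsTree.exists_centroid {α : Type*} (hT : T.IsTree) (s : Finset α) (g : α → ι) :
    ∃ z, ∀ y, 2 * #{v ∈ s | g v ∈ T.branch z y} ≤ #s := by
  rcases s.eq_empty_or_nonempty with rfl | ⟨v₀, hv₀⟩
  · obtain ⟨z⟩ := hT.connected.nonempty
    exact ⟨z, fun y => by simp⟩
  let path (v : α) : T.Walk (g v₀) (g v) := (hT.connected.preconnected _ _).some
  set hull := s.biUnion fun v => (path v).support.toFinset
  have mem_hull {v x} (hv : v ∈ s) (hx : x ∈ (path v).support) : x ∈ hull :=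
    mem_biUnion.2 ⟨v, hv, List.mem_toFinset.2 hx⟩
  have hull_walk : ∀ z ∈ hull, ∀ v ∈ s, ∃ q : T.Walk z (g v), ∀ x ∈ q.support, x ∈ hull := by
    intro z hz v hv
    obtain ⟨w, hw, hzw⟩ := mem_biUnion.1 hz
    have hzw := List.mem_toFinset.1 hzw
    refine ⟨((path w).takeUntil z hzw).reverse.append (path v), fun x hx => ?_⟩
    rw [Walk.mem_support_append_iff, Walk.support_reverse, List.mem_reverse] at hx
    exact hx.elim (fun hx => mem_hull hw (Walk.support_takeUntil_subset_support _ _ hx))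
      (mem_hull hv)
  have weight_add_le {A B : Set ι} (hAB : Disjoint A B) :
      #{v ∈ s | g v ∈ A} + #{v ∈ s | g v ∈ B} ≤ #s := by
    rw [← card_filter_add_card_filter_not (s := s) (fun v => g v ∈ A)]
    exact Nat.add_le_add_left (card_le_card (monotone_filter_right s
      fun _ _ hv => Set.disjoint_right.1 hAB hv)) _
  -- The tree may be infinite, so descend inside the finite hull of the points: stepping from `z`
  -- into its heavy branch, the heavy branch at the new node lies strictly inside the old one.
  by_contra! heavy
  choose ys hys using heavy
  obtain ⟨z, hz, hmin⟩ := hull.exists_min_image (fun z => #{x ∈ hull | x ∈ T.branch z (ys z)})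
    ⟨g v₀, mem_hull hv₀ (path v₀).start_mem_support⟩
  obtain ⟨v, hv, hgv⟩ : ∃ v ∈ s, g v ∈ T.branch z (ys z) := by
    refine filter_nonempty_iff.1 (card_pos.1 ?_)
    have := hys z
    omega
  obtain ⟨q, hq⟩ := hull_walk z hz v hv
  obtain ⟨z', hz'q, hadj, hbranch⟩ := exists_adj_mem_branch q hgv
  have hz : z ∉ T.branch z' (ys z') := by
    intro hz_mem
    have hdisj : Disjoint (T.branch z' (ys z')) (T.branch z (ys z)) := by
      rw [← branch_eq_of_mem hz_mem, ← hbranch]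
      exact (hT.isAcyclic.disjoint_branch_of_adj hadj).symm
    have := weight_add_le hdisj
    have := hys z
    have := hys z'
    omega
  have hsub := hT.branch_subset_of_adj hadj hz
  rw [hbranch] at hsub
  refine not_le.2 (card_lt_card ?_) (hmin z' (hq z' hz'q))
  refine ⟨monotone_filter_right _ fun _ _ hx => (hsub hx).1, fun h => ?_⟩
  have := h (mem_filter.2 ⟨hq z' hz'q, hbranch ▸ mem_branch_self hadj.ne.symm⟩)
  exact (hsub (mem_filter.1 this).2).2 rfl

end SimpleGraph

open SimpleGraph

namespace TreeDecomp

variable {V : Type u} {G : SimpleGraph V} (D : TreeDecomp G)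

noncomputable def node (v : V) : D.ι := (D.hvert v).nonempty.some.1

lemma mem_bag_node (v : V) : v ∈ D.bag (D.node v) := (D.hvert v).nonempty.some.2

lemma mem_branch_of_mem_bag {v : V} {z ζ : D.ι} (hz : v ∉ D.bag z) (hζ : v ∈ D.bag ζ) :
    ζ ∈ D.T.branch z (D.node v) := by
  obtain ⟨p⟩ := (D.hvert v).preconnected ⟨D.node v, D.mem_bag_node v⟩ ⟨ζ, hζ⟩
  refine ⟨p.map (Embedding.induce _).toHom, ?_⟩
  erw [Walk.support_map, List.mem_map]
  rintro ⟨x, -, rfl⟩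
  exact hz x.2

lemma branch_node_eq_of_reachable {z : D.ι} {w₁ w₂ : ↥(D.bag z)ᶜ}
    (h : (G.induce (D.bag z)ᶜ).Reachable w₁ w₂) :
    D.T.branch z (D.node w₁) = D.T.branch z (D.node w₂) := by
  obtain ⟨p⟩ := h
  induction p with
  | nil => rfl
  | @cons x y _ hxy _ ih =>
    obtain ⟨ζ, hζx, hζy⟩ := D.hedge _ _ hxy
    exact (branch_eq_of_mem_of_mem (D.mem_branch_of_mem_bag x.2 hζx)
      (D.mem_branch_of_mem_bag y.2 hζy)).trans ih

end TreeDecomp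

lemma TreewidthLE.exists_bag_separator {W : Type u} [Finite W] {G : SimpleGraph W} {k : ℕ}
    (h : TreewidthLE G k) (A : Set W) :
    ∃ B : Set W, B.ncard ≤ k + 1 ∧ ∀ K : (G.induce Bᶜ).ConnectedComponent,
      2 * (A ∩ Subtype.val '' K.supp).ncard ≤ A.ncard := by
  obtain ⟨D, hD⟩ := h
  obtain ⟨z, hz⟩ := D.tree.exists_centroid A.toFinite.toFinset D.node
  refine ⟨D.bag z, hD z, fun K => ?_⟩
  obtain ⟨u₀, rfl⟩ := K.exists_rep
  rw [Set.ncard_eq_toFinset_card A A.toFinite]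
  refine le_trans (Nat.mul_le_mul_left 2 ?_) (hz (D.node u₀))
  rw [← Set.ncard_coe_finset]
  refine Set.ncard_le_ncard ?_ (Finset.finite_toSet _)
  rintro _ ⟨hvA, u, hu, rfl⟩
  simp only [Finset.coe_filter, Set.Finite.mem_toFinset, Set.mem_ofPred_eq]
  refine ⟨hvA, ?_⟩
  rw [← D.branch_node_eq_of_reachable (ConnectedComponent.exact hu)]
  exact mem_branch_self fun h => u.2 (by simpa [h] using D.mem_bag_node u.1)

lemma exists_isBalancedSeparator_of_treewidthLE {V : Type u} [Finite V] {G : SimpleGraph V}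
    {X : Set V} {k : ℕ} (hX : TreewidthLE (G.induce Xᶜ) k) {S : Set V} {H : SimpleGraph S}
    (hHG : H ≤ G.induce S) :
    ∃ C : Set S, IsBalancedSeparator H C ∧ C.ncard ≤ (X ∩ S).ncard + (k + 1) := by
  obtain ⟨B, hB, hsep⟩ := hX.exists_bag_separator {w | ↑w ∈ S}
  set C : Set S := {v | ↑v ∈ X ∨ ↑v ∈ Subtype.val '' B}
  refine ⟨C, fun K => ?_, ?_⟩
  · let φ : H.induce Cᶜ →g (G.induce Xᶜ).induce Bᶜ :=
      { toFun w := ⟨⟨w.1.1, fun h => w.2 (.inl h)⟩, fun h => w.2 (.inr ⟨_, h, rfl⟩)⟩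
        map_rel' h := hHG h }
    have hK : K.supp.ncard ≤ ({w : ↥Xᶜ | ↑w ∈ S} ∩ Subtype.val '' (K.map φ).supp).ncard := by
      refine Set.ncard_le_ncard_of_injOn (fun w => (φ w).1) (fun w hw => ⟨w.1.2, φ w, ?_, rfl⟩)
        (fun w₁ _ w₂ _ h => by ext; exact congrArg (fun x : ↥Xᶜ => (x : V)) h)
      rw [ConnectedComponent.mem_supp_iff] at hw ⊢
      rw [← hw, ConnectedComponent.map_mk]
    have hS : {w : ↥Xᶜ | ↑w ∈ S}.ncard ≤ Nat.card S := by
      rw [Nat.card_coe_set_eq, ← Set.ncard_image_of_injective _ Subtype.val_injective]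
      exact Set.ncard_le_ncard (by rintro _ ⟨w, hw, rfl⟩; exact hw)
    have := hsep (K.map φ)
    omega
  · have hC : Subtype.val '' C ⊆ (X ∩ S) ∪ Subtype.val '' B := by
      rintro _ ⟨v, hv | hv, rfl⟩
      exacts [.inl ⟨hv, v.2⟩, .inr hv]
    calc C.ncard = (Subtype.val '' C).ncard :=
          (Set.ncard_image_of_injective _ Subtype.val_injective).symm
      _ ≤ ((X ∩ S) ∪ Subtype.val '' B).ncard := Set.ncard_le_ncard hC
      _ ≤ (X ∩ S).ncard + (Subtype.val '' B).ncard := Set.ncard_union_le _ _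
      _ ≤ (X ∩ S).ncard + (k + 1) := by
        rw [Set.ncard_image_of_injective _ Subtype.val_injective]
        omega

lemma Finset.exists_le_of_sum_mul_le {ι : Type*} {s : Finset ι} {p a : ι → ℝ} {c : ℝ}
    (hp : ∀ i ∈ s, 0 ≤ p i) (hp_sum : ∑ i ∈ s, p i = 1) (h : ∑ i ∈ s, p i * a i ≤ c) :
    ∃ i ∈ s, a i ≤ c := by
  by_contra! hlt
  obtain ⟨i, hi, hpi⟩ := Finset.exists_ne_zero_of_sum_ne_zero (hp_sum ▸ one_ne_zero)
  have : c < ∑ i ∈ s, p i * a i := calc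
    c = ∑ i ∈ s, p i * c := by rw [← Finset.sum_mul, hp_sum, one_mul]
    _ < ∑ i ∈ s, p i * a i := Finset.sum_lt_sum
      (fun j hj => mul_le_mul_of_nonneg_left (hlt j hj).le (hp j hj))
      ⟨i, hi, mul_lt_mul_of_pos_left (hlt i hi) ((hp i hi).lt_of_ne' hpi)⟩
  linarith

lemma ThinDist.sum_mul_ncard_inter_le {V : Type u} [Finite V] {𝒳 : Set (Set V)} {ε : ℝ}
    (D : ThinDist 𝒳 ε) (S : Set V) :
    ∑ X ∈ D.supp, D.p X * (X ∩ S).ncard ≤ S.ncard * ε := by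
  have hS := S.toFinite
  calc ∑ X ∈ D.supp, D.p X * (X ∩ S).ncard
      = ∑ X ∈ D.supp, ∑ v ∈ hS.toFinset, if v ∈ X then D.p X else 0 := by
        refine Finset.sum_congr rfl fun X _ => ?_
        have hXS : X ∩ S = ↑({v ∈ hS.toFinset | v ∈ X}) := by ext; simp [and_comm]
        rw [hXS, Set.ncard_coe_finset, ← Finset.sum_filter, Finset.sum_const, nsmul_eq_mul,
          mul_comm]
    _ = ∑ v ∈ hS.toFinset, ∑ X ∈ D.supp, if v ∈ X then D.p X else 0 := Finset.sum_comm
    _ ≤ ∑ v ∈ hS.toFinset, ε := Finset.sum_le_sum fun v _ => D.thin v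
    _ = S.ncard * ε := by rw [Finset.sum_const, nsmul_eq_mul, Set.ncard_eq_toFinset_card S hS]

lemma ThinDist.exists_ncard_inter_le {V : Type u} [Finite V] {𝒳 : Set (Set V)} {ε : ℝ}
    (D : ThinDist 𝒳 ε) (S : Set V) : ∃ X ∈ 𝒳, ((X ∩ S).ncard : ℝ) ≤ S.ncard * ε := by
  obtain ⟨X, hX, hle⟩ :=
    Finset.exists_le_of_sum_mul_le (fun X _ => D.nonneg X) D.total (D.sum_mul_ncard_inter_le S)
  exact ⟨X, D.mem X hX, hle⟩

lemma ThinDist.exists_isBalancedSeparator {V : Type u} [Finite V] {G : SimpleGraph V} {k : ℕ}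
    {ε : ℝ} (D : ThinDist (coTW G k) ε) {S : Set V} {H : SimpleGraph S} (hHG : H ≤ G.induce S) :
    ∃ C : Set S, IsBalancedSeparator H C ∧ (C.ncard : ℝ) ≤ S.ncard * ε + (k + 1) := by
  obtain ⟨X, hX, hXS⟩ := D.exists_ncard_inter_le S
  obtain ⟨C, hC, hCcard⟩ := exists_isBalancedSeparator_of_treewidthLE hX hHG
  have : (C.ncard : ℝ) ≤ (X ∩ S).ncard + (k + 1) := by exact_mod_cast hCcard
  exact ⟨C, hC, by linarith⟩

lemma rpow_mul_sq_rpow_le {t m L ℓ : ℝ} (ht : 0 ≤ t) (hm : 0 < m) (hL : 0 ≤ L)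
    (hLm : L ^ (4 * t) ≤ m) (hℓ : 0 ≤ ℓ) (hℓm : ℓ ≤ 2 * m ^ (1 / (2 * t + 2))) :
    (ℓ * L ^ 2) ^ t ≤ 2 ^ t * m ^ (1 - 1 / (2 * t + 2)) := by
  have hL2 : (L ^ 2) ^ t = (L ^ (4 * t)) ^ (1 / 2 : ℝ) := by
    rw [← Real.rpow_natCast, ← Real.rpow_mul hL, ← Real.rpow_mul hL]
    ring_nf
  have hexp : 1 / (2 * t + 2) * t + 1 / 2 = 1 - 1 / (2 * t + 2) := by
    field_simp
    ring
  calc (ℓ * L ^ 2) ^ t = ℓ ^ t * (L ^ 2) ^ t := Real.mul_rpow hℓ (sq_nonneg L)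
    _ ≤ (2 * m ^ (1 / (2 * t + 2))) ^ t * m ^ (1 / 2 : ℝ) := by
      rw [hL2]
      gcongr
    _ = 2 ^ t * m ^ (1 - 1 / (2 * t + 2)) := by
      rw [Real.mul_rpow zero_le_two (by positivity), ← Real.rpow_mul hm.le, mul_assoc,
        ← Real.rpow_add hm, hexp]

lemma exists_nat_rpow_le_le_two_mul_rpow {m : ℕ} {s : ℝ} (hm : 1 ≤ (m : ℝ)) (hs₀ : 0 ≤ s)
    (hs₁ : s ≤ 1) : ∃ ℓ : ℕ, 1 ≤ ℓ ∧ ℓ ≤ m ∧ (m : ℝ) ^ s ≤ ℓ ∧ (ℓ : ℝ) ≤ 2 * (m : ℝ) ^ s := by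
  have hms : 1 ≤ (m : ℝ) ^ s := Real.one_le_rpow hm hs₀
  refine ⟨⌈(m : ℝ) ^ s⌉₊, Nat.one_le_iff_ne_zero.2 (by positivity),
    Nat.ceil_le.2 (Real.rpow_le_self_of_one_le hm hs₁), Nat.le_ceil _, ?_⟩
  linarith [Nat.ceil_lt_add_one (by positivity : 0 ≤ (m : ℝ) ^ s)]

theorem stmt12_general (t b : ℝ) (ht : 0 ≤ t) (hb : 0 < b) (k : ℕ → ℕ → ℕ)
    (hk : ∀ ℓ n : ℕ, 1 ≤ ℓ → 2 ≤ n →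
      (k ℓ n : ℝ) ≤ b * ((ℓ : ℝ) * (Real.logb 2 n) ^ 2) ^ t) :
    ∃ c : ℝ, 0 < c ∧
      ∀ (V : Type) [Fintype V] (G : SimpleGraph V) (n : ℕ),
        Fintype.card V = n → 2 ≤ n →
        (∀ ℓ : ℕ, 1 ≤ ℓ → ℓ ≤ n →
          Nonempty (ThinDist (coTW G (k ℓ n)) ((ℓ : ℝ)⁻¹))) →
        ∀ (S : Set V) (H : SimpleGraph S) (m : ℕ),
          H ≤ G.induce S → S.ncard = m → (Real.logb 2 n) ^ (4 * t) ≤ (m : ℝ) →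
          ∃ C : Set S, IsBalancedSeparator H C ∧
            (C.ncard : ℝ) ≤ c * (m : ℝ) ^ (1 - 1 / (2 * t + 2)) := by
  refine ⟨b * 2 ^ t + 2, by positivity, ?_⟩
  intro V _ G n hcard hn hfrag S H m hHG hSm hmlog
  have hlog : 1 ≤ Real.logb 2 n := by
    rw [Real.le_logb_iff_rpow_le one_lt_two (by positivity)]
    exact_mod_cast hn
  have hm : 1 ≤ (m : ℝ) := (Real.one_le_rpow hlog (by positivity)).trans hmlog
  set s := 1 / (2 * t + 2) with hs_def
  have hs : 0 ≤ s ∧ s ≤ 1 := ⟨by positivity, by rw [hs_def, div_le_one (by linarith)]; linarith⟩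
  obtain ⟨ℓ, hℓ, hℓm, hmℓ, hℓ2⟩ := exists_nat_rpow_le_le_two_mul_rpow hm hs.1 hs.2
  have hmn : m ≤ n := hSm ▸ hcard ▸ Nat.card_eq_fintype_card (α := V) ▸ S.ncard_le_card
  obtain ⟨D⟩ := hfrag ℓ hℓ (hℓm.trans hmn)
  obtain ⟨C, hC, hCcard⟩ := D.exists_isBalancedSeparator hHG
  refine ⟨C, hC, ?_⟩
  have hm_div : (m : ℝ) * (ℓ : ℝ)⁻¹ ≤ (m : ℝ) ^ (1 - s) := by
    calc (m : ℝ) * (ℓ : ℝ)⁻¹ ≤ m / (m : ℝ) ^ s := by rw [← div_eq_mul_inv]; gcongr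
      _ = (m : ℝ) ^ (1 - s) := by rw [Real.rpow_sub (by positivity), Real.rpow_one]
  have hk_le : (k ℓ n : ℝ) ≤ b * 2 ^ t * (m : ℝ) ^ (1 - s) := by
    refine (hk ℓ n hℓ hn).trans ?_
    rw [mul_assoc]
    gcongr
    exact rpow_mul_sq_rpow_le ht (by positivity) (by positivity) hmlog (by positivity) hℓ2
  have hms : 1 ≤ (m : ℝ) ^ (1 - s) := Real.one_le_rpow hm (by linarith)
  rw [hSm] at hCcard
  linarith

/-- Lemma 8: fractional `k`-treewidth-fragility with
`k(ℓ,n) ≤ b(ℓ log² n)^t` yields balanced separators of order `O(m^{1-1/(2t+2)})` in all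
subgraphs with `m ≥ (log n)^{4t}` vertices. -/
theorem stmt12 (t b : ℝ) (ht : 0 ≤ t) (hb : 0 < b) (k : ℕ → ℕ → ℕ)
    (hmono : ∀ ℓ ℓ' n n' : ℕ, ℓ ≤ ℓ' → n ≤ n' → k ℓ n ≤ k ℓ' n')
    (hk : ∀ ℓ n : ℕ, 1 ≤ ℓ → 2 ≤ n →
      (k ℓ n : ℝ) ≤ b * ((ℓ : ℝ) * (Real.logb 2 n) ^ 2) ^ t) :
    ∃ c : ℝ, 0 < c ∧
      ∀ (V : Type) [Fintype V] (G : SimpleGraph V) (n : ℕ),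
        Fintype.card V = n → 2 ≤ n →
        (∀ ℓ : ℕ, 1 ≤ ℓ → ℓ ≤ n →
          Nonempty (ThinDist (coTW G (k ℓ n)) ((ℓ : ℝ)⁻¹))) →
        ∀ (S : Set V) (H : SimpleGraph S) (m : ℕ),
          H ≤ G.induce S → S.ncard = m → (Real.logb 2 n) ^ (4 * t) ≤ (m : ℝ) →
          ∃ C : Set S, IsBalancedSeparator H C ∧
            (C.ncard : ℝ) ≤ c * (m : ℝ) ^ (1 - 1 / (2 * t + 2)) :=
  stmt12_general t b ht hb k hk
end

section
/- Let G be a finite simple graph with at most n vertices, let ℓ₀, r ≥ 1 be integers, and let q : V(G) → ℚ assign positive costs to the vertices of G such that q(v) ≥ q(V(G))/r for every v ∈ V(G). Then at least one of the following holds: (i) there exists a vertex v₀ ∈ V(G) such that every other vertex of G is at distance at most ⌊2 + ℓ₀·log₂(rn)⌋ from v₀; or (ii) there exists a partition of V(G) into parts C₂, D, E such that there are no edges of G between D and E, D ≠ ∅, E ≠ ∅, q(C₂) ≤ q(D)/ℓ₀ and q(C₂) ≤ q(E)/ℓ₀. -/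
open scoped Classical

universe u

set_option maxHeartbeats 1600000 in
/-- Lemma 11: either `G` has a vertex of small eccentricity, or its
vertex set can be partitioned into `C₂, D, E` with no edges between `D` and `E`,
`D, E ≠ ∅`, and `q(C₂) ≤ q(D)/ℓ₀`, `q(C₂) ≤ q(E)/ℓ₀`. -/
theorem stmt15 {V : Type} [Fintype V] [Nonempty V] [DecidableEq V] (n : ℕ)
    (hn : Fintype.card V ≤ n) (G : SimpleGraph V) (ℓ₀ r : ℕ)
    (hℓ₀ : 1 ≤ ℓ₀) (hr : 1 ≤ r)
    (q : V → ℚ) (hq : ∀ v, 0 < q v) (hqr : ∀ v, (∑ u, q u) / (r : ℚ) ≤ q v) :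
    (∃ v₀ : V, ∀ u : V, G.Reachable v₀ u ∧
      (G.dist v₀ u : ℝ) ≤ 2 + (ℓ₀ : ℝ) * Real.logb 2 ((r : ℝ) * n)) ∨
    (∃ C₂ D E : Finset V,
      Disjoint C₂ D ∧ Disjoint C₂ E ∧ Disjoint D E ∧ C₂ ∪ D ∪ E = Finset.univ ∧
      (∀ u ∈ D, ∀ v ∈ E, ¬ G.Adj u v) ∧
      D.Nonempty ∧ E.Nonempty ∧
      (∑ v ∈ C₂, q v) ≤ (∑ v ∈ D, q v) / (ℓ₀ : ℚ) ∧
      (∑ v ∈ C₂, q v) ≤ (∑ v ∈ E, q v) / (ℓ₀ : ℚ)) := by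
    classical
  set Q : ℚ := ∑ u, q u with hQdef
  have hQpos : 0 < Q := Finset.sum_pos (fun v _ => hq v) Finset.univ_nonempty
  have hn1 : 1 ≤ n := le_trans Fintype.card_pos hn
  have hrn1 : (1:ℝ) ≤ (r:ℝ) * (n:ℝ) := by
    have h1 : (1:ℝ) ≤ (r:ℝ) := by exact_mod_cast hr
    have h2 : (1:ℝ) ≤ (n:ℝ) := by exact_mod_cast hn1
    nlinarith
  have hlogb0 : 0 ≤ Real.logb 2 ((r:ℝ) * n) := Real.logb_nonneg one_lt_two hrn1
  have hl0Q : (0:ℚ) < (ℓ₀:ℚ) := by exact_mod_cast hℓ₀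
  have hl0R : (0:ℝ) ≤ (ℓ₀:ℝ) := Nat.cast_nonneg _
  by_cases hconn : G.Connected
  · -- connected case
    obtain ⟨v₀, -, hv₀max⟩ := Finset.exists_max_image Finset.univ q Finset.univ_nonempty
    set d : V → ℕ := fun u => G.dist v₀ u with hd
    set k : ℕ := Finset.univ.sup d with hkdef
    have hdk : ∀ u, d u ≤ k := fun u => Finset.le_sup (Finset.mem_univ u)
    obtain ⟨uk, -, huk⟩ := Finset.exists_mem_eq_sup Finset.univ Finset.univ_nonempty d
    set B : ℕ → Finset V := fun i => Finset.univ.filter (fun u => d u ≤ i) with hB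
    set L : ℕ → Finset V := fun i => Finset.univ.filter (fun u => d u = i) with hL
    set T : ℕ → Finset V := fun i => Finset.univ.filter (fun u => i ≤ d u) with hT
    set qB : ℕ → ℚ := fun i => ∑ v ∈ B i, q v with hqB
    set qL : ℕ → ℚ := fun i => ∑ v ∈ L i, q v with hqL
    set qT : ℕ → ℚ := fun i => ∑ v ∈ T i, q v with hqT
    have hqnn : ∀ x : V, 0 ≤ q x := fun x => (hq x).le
    have hqBmono : ∀ {i j : ℕ}, i ≤ j → qB i ≤ qB j := by
      intro i j hij
      apply Finset.sum_le_sum_of_subset_of_nonneg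
      · intro x hx
        simp only [hB, Finset.mem_filter, Finset.mem_univ, true_and] at hx ⊢
        omega
      · intro x _ _; exact hqnn x
    have hqLnn : ∀ i, 0 ≤ qL i := fun i => Finset.sum_nonneg fun x _ => hqnn x
    have hqTnn : ∀ i, 0 ≤ qT i := fun i => Finset.sum_nonneg fun x _ => hqnn x
    have hqBnn : ∀ i, 0 ≤ qB i := fun i => Finset.sum_nonneg fun x _ => hqnn x
    have hBT : ∀ i, qB i + qT (i+1) = Q := by
      intro i
      have h1 : T (i+1) = Finset.univ.filter (fun u => ¬ d u ≤ i) := by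
        ext x
        simp only [hT, Finset.mem_filter, Finset.mem_univ, true_and]
        omega
      simp only [hqB, hqT]
      rw [h1]
      exact Finset.sum_filter_add_sum_filter_not _ _ _
    have hsplitB : ∀ i, qB (i+1) = qB i + qL (i+1) := by
      intro i
      have h1 : B i = (B (i+1)).filter (fun u => d u ≤ i) := by
        ext x
        simp only [hB, Finset.mem_filter, Finset.mem_univ, true_and]
        omega
      have h2 : L (i+1) = (B (i+1)).filter (fun u => ¬ d u ≤ i) := by
        ext x
        simp only [hB, hL, Finset.mem_filter, Finset.mem_univ, true_and]
        omega
      simp only [hqB, hqL]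
      rw [h1, h2]
      exact (Finset.sum_filter_add_sum_filter_not _ _ _).symm
    have hsplitT : ∀ i, qT i = qL i + qT (i+1) := by
      intro i
      have h1 : L i = (T i).filter (fun u => d u = i) := by
        ext x
        simp only [hT, hL, Finset.mem_filter, Finset.mem_univ, true_and]
        omega
      have h2 : T (i+1) = (T i).filter (fun u => ¬ d u = i) := by
        ext x
        simp only [hT, Finset.mem_filter, Finset.mem_univ, true_and]
        omega
      simp only [hqL, hqT]
      rw [h1, h2]
      exact (Finset.sum_filter_add_sum_filter_not _ _ _).symm
    have hdv₀ : d v₀ = 0 := by simp [hd]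
    have hv₀B : v₀ ∈ B 0 := by
      simp only [hB, Finset.mem_filter, Finset.mem_univ, true_and]
      omega
    have hukT : uk ∈ T k := by
      simp only [hT, Finset.mem_filter, Finset.mem_univ, true_and]
      omega
    have hqB0 : q v₀ ≤ qB 0 := Finset.single_le_sum (fun x _ => hqnn x) hv₀B
    have hqB0n : Q ≤ (n:ℚ) * qB 0 := by
      have h1 : Q ≤ (Fintype.card V : ℚ) * q v₀ := by
        have := Finset.sum_le_card_nsmul Finset.univ q (q v₀)
          (fun x _ => hv₀max x (Finset.mem_univ x))
        simpa [nsmul_eq_mul, Finset.card_univ] using this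
      have h2 : (Fintype.card V : ℚ) * q v₀ ≤ (n:ℚ) * q v₀ := by
        apply mul_le_mul_of_nonneg_right _ (hqnn v₀)
        exact_mod_cast hn
      have h3 : (n:ℚ) * q v₀ ≤ (n:ℚ) * qB 0 := by
        apply mul_le_mul_of_nonneg_left hqB0 (by positivity)
      linarith
    have hqTkr : Q ≤ (r:ℚ) * qT k := by
      have h1 : Q ≤ (r:ℚ) * q uk := by
        have hr0 : (0:ℚ) < (r:ℚ) := by exact_mod_cast hr
        have := hqr uk
        rw [div_le_iff₀ hr0] at this
        linarith
      have h2 : (r:ℚ) * q uk ≤ (r:ℚ) * qT k := by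
        apply mul_le_mul_of_nonneg_left _ (by positivity)
        exact Finset.single_le_sum (fun x _ => hqnn x) hukT
      linarith
    have hBkQ : qB k = Q := by
      have : B k = Finset.univ := by
        ext x
        simp only [hB, Finset.mem_filter, Finset.mem_univ, true_and]
        simp [hdk x]
      simp only [hqB]
      rw [this]
    -- existence of crossing index
    have hex : ∃ m, Q < 2 * qB m := ⟨k, by rw [hBkQ]; linarith⟩
    obtain ⟨a, ha, ha'⟩ : ∃ a, (Q < 2 * qB a) ∧ ∀ j, j < a → 2 * qB j ≤ Q :=
      ⟨Nat.find hex, Nat.find_spec hex, fun j hj => le_of_not_gt (Nat.find_min hex hj)⟩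
    have hak : a ≤ k := by
      by_contra hcon
      push_neg at hcon
      have := ha' k hcon
      rw [hBkQ] at this
      linarith
    set c : ℚ := 1 + (ℓ₀:ℚ)⁻¹ with hc
    have hc1 : (1:ℚ) ≤ c := by
      have h0 : (0:ℚ) ≤ (ℓ₀:ℚ)⁻¹ := by positivity
      rw [hc]
      linarith
    have hc0 : (0:ℚ) ≤ c := by linarith
    have hc2 : (2:ℚ) ≤ c ^ ℓ₀ := by
      have h1 := one_add_mul_le_pow (a := (ℓ₀:ℚ)⁻¹) (by linarith [inv_nonneg.mpr hl0Q.le]) ℓ₀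
      have h2 : (ℓ₀:ℚ) * (ℓ₀:ℚ)⁻¹ = 1 := mul_inv_cancel₀ (ne_of_gt hl0Q)
      calc (2:ℚ) = 1 + (ℓ₀:ℚ) * (ℓ₀:ℚ)⁻¹ := by rw [h2]; norm_num
      _ ≤ (1 + (ℓ₀:ℚ)⁻¹) ^ ℓ₀ := h1
    by_cases hgood : ∃ i : ℕ, i + 1 ≤ k - 1 ∧ (ℓ₀:ℚ) * qL (i+1) ≤ qB i ∧
        (ℓ₀:ℚ) * qL (i+1) ≤ qT (i+2)
    · -- good separator level: case (ii)
      obtain ⟨i, hik, hg1, hg2⟩ := hgood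
      right
      refine ⟨L (i+1), B i, T (i+2), ?_, ?_, ?_, ?_, ?_, ?_, ?_, ?_, ?_⟩
      · rw [Finset.disjoint_left]
        intro x hx hx'
        simp only [hB, hL, Finset.mem_filter, Finset.mem_univ, true_and] at hx hx'
        omega
      · rw [Finset.disjoint_left]
        intro x hx hx'
        simp only [hT, hL, Finset.mem_filter, Finset.mem_univ, true_and] at hx hx'
        omega
      · rw [Finset.disjoint_left]
        intro x hx hx'
        simp only [hB, hT, Finset.mem_filter, Finset.mem_univ, true_and] at hx hx'
        omega
      · ext x
        simp only [hB, hL, hT, Finset.mem_union, Finset.mem_filter, Finset.mem_univ, true_and,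
          iff_true]
        omega
      · intro x hx y hy hadj
        simp only [hB, hT, Finset.mem_filter, Finset.mem_univ, true_and] at hx hy
        have h1 : G.dist v₀ y ≤ G.dist v₀ x + G.dist x y := hconn.dist_triangle
        have h2 : G.dist x y = 1 := SimpleGraph.dist_eq_one_iff_adj.mpr hadj
        have hdx : d x = G.dist v₀ x := rfl
        have hdy : d y = G.dist v₀ y := rfl
        omega
      · exact ⟨v₀, by simp only [hB, Finset.mem_filter, Finset.mem_univ, true_and]; omega⟩
      · refine ⟨uk, ?_⟩
        simp only [hT, Finset.mem_filter, Finset.mem_univ, true_and]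
        omega
      · rw [le_div_iff₀ hl0Q]
        calc (∑ v ∈ L (i+1), q v) * (ℓ₀:ℚ) = (ℓ₀:ℚ) * qL (i+1) := by rw [hqL]; ring
        _ ≤ qB i := hg1
        _ = ∑ v ∈ B i, q v := rfl
      · rw [le_div_iff₀ hl0Q]
        calc (∑ v ∈ L (i+1), q v) * (ℓ₀:ℚ) = (ℓ₀:ℚ) * qL (i+1) := by rw [hqL]; ring
        _ ≤ qT (i+2) := hg2
        _ = ∑ v ∈ T (i+2), q v := rfl
    · -- no good level: eccentricity of v₀ is small, case (i)
      push_neg at hgood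
      have hbad : ∀ j : ℕ, j + 1 ≤ k - 1 → (ℓ₀:ℚ) * qL (j+1) ≤ qB j →
          qT (j+2) < (ℓ₀:ℚ) * qL (j+1) := by
        intro j h1 h2
        have := hgood j h1 h2
        linarith [this]
      left
      refine ⟨v₀, fun u => ⟨hconn.preconnected v₀ u, ?_⟩⟩
      have hdu : (G.dist v₀ u : ℝ) ≤ (k:ℝ) := by exact_mod_cast hdk u
      by_cases hk2 : 2 ≤ k
      · -- main bound
        have S1 : ∀ j, j + 1 ≤ k - 1 → j + 1 < a → c * qB j ≤ qB (j+1) := by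
          intro j hjk hja
          have h2 : 2 * qB (j+1) ≤ Q := ha' _ hja
          have hBT' := hBT (j+1)
          have hmono : qB j ≤ qB (j+1) := hqBmono (Nat.le_succ j)
          have hkey : qB j < (ℓ₀:ℚ) * qL (j+1) := by
            by_contra hcon
            push_neg at hcon
            have := hbad j hjk hcon
            linarith
          have hsplit := hsplitB j
          have hinv : qB j * (ℓ₀:ℚ)⁻¹ ≤ qL (j+1) := by
            rw [← div_eq_mul_inv, div_le_iff₀ hl0Q]
            linarith
          calc c * qB j = qB j + qB j * (ℓ₀:ℚ)⁻¹ := by rw [hc]; ring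
          _ ≤ qB j + qL (j+1) := by linarith
          _ = qB (j+1) := hsplit.symm
        have S2 : ∀ j, a ≤ j → j + 1 ≤ k - 1 → c * qT (j+2) ≤ qT (j+1) := by
          intro j haj hjk
          have hmono : qB a ≤ qB j := hqBmono haj
          have hBT' := hBT j
          have hsplit := hsplitT (j+1)
          have hTanti : qT (j+2) ≤ qT (j+1) := by
            rw [hsplit]; linarith [hqLnn (j+1)]
          have hkey : qT (j+2) < (ℓ₀:ℚ) * qL (j+1) := by
            by_contra hcon
            push_neg at hcon
            have hle : (ℓ₀:ℚ) * qL (j+1) ≤ qB j := by linarith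
            have := hbad j hjk hle
            linarith
          have hinv : qT (j+2) * (ℓ₀:ℚ)⁻¹ ≤ qL (j+1) := by
            rw [← div_eq_mul_inv, div_le_iff₀ hl0Q]
            linarith
          calc c * qT (j+2) = qT (j+2) + qT (j+2) * (ℓ₀:ℚ)⁻¹ := by rw [hc]; ring
          _ ≤ qT (j+2) + qL (j+1) := by linarith
          _ = qT (j+1) := by linarith [hsplit]
        have H1 : ∀ j, j ≤ k - 1 → j < a → c ^ j * qB 0 ≤ qB j := by
          intro j
          induction j with
          | zero => intro _ _; simp
          | succ j ih =>
            intro hj1 hj2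
            calc c ^ (j+1) * qB 0 = c * (c ^ j * qB 0) := by ring
            _ ≤ c * qB j := by
                apply mul_le_mul_of_nonneg_left (ih (by omega) (by omega)) (by linarith)
            _ ≤ qB (j+1) := S1 j hj1 hj2
        have H2 : ∀ s, a + 1 + s ≤ k → c ^ s * qT (a + s + 1) ≤ qT (a+1) := by
          intro s
          induction s with
          | zero => intro _; simp
          | succ s ih =>
            intro hs
            have hstep : c * qT (a + s + 2) ≤ qT (a + s + 1) := S2 (a+s) (by omega) (by omega)
            have e1 : c ^ (s+1) * qT (a + (s+1) + 1) = c ^ s * (c * qT (a + s + 2)) := by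
              have e : a + (s+1) + 1 = a + s + 2 := by omega
              rw [e]; ring
            calc c ^ (s+1) * qT (a + (s+1) + 1) = c ^ s * (c * qT (a + s + 2)) := e1
            _ ≤ c ^ s * qT (a + s + 1) := by
                apply mul_le_mul_of_nonneg_left hstep (pow_nonneg hc0 s)
            _ ≤ qT (a+1) := ih (by omega)
        -- from chains to 2 * c^(k-2) ≤ r * n
        have hgrow : ∀ j, j ≤ k - 1 → j < a → 2 * c ^ j ≤ (n:ℚ) := by
          intro j hj1 hj2
          have h1 := H1 j hj1 hj2
          have h2 : 2 * qB j ≤ Q := ha' j hj2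
          have h3 : 2 * (c ^ j * Q) ≤ (n:ℚ) * Q := by
            have h4 : c ^ j * Q ≤ c ^ j * ((n:ℚ) * qB 0) :=
              mul_le_mul_of_nonneg_left hqB0n (pow_nonneg hc0 j)
            have h5 : (n:ℚ) * (c ^ j * qB 0) ≤ (n:ℚ) * qB j :=
              mul_le_mul_of_nonneg_left h1 (by positivity)
            nlinarith [hqBnn j]
          nlinarith [hQpos]
        have hshrink : ∀ s, a + 1 + s ≤ k → a + s + 1 = k → 2 * c ^ s ≤ (r:ℚ) := by
          intro s hs hsk
          have h1 := H2 s hs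
          rw [hsk] at h1
          have h2 : 2 * qT (a+1) ≤ Q := by
            have := hBT a
            linarith
          have h3 : 2 * (c ^ s * Q) ≤ (r:ℚ) * Q := by
            have h4 : c ^ s * Q ≤ c ^ s * ((r:ℚ) * qT k) :=
              mul_le_mul_of_nonneg_left hqTkr (pow_nonneg hc0 s)
            have h5 : (r:ℚ) * (c ^ s * qT k) ≤ (r:ℚ) * qT (a+1) :=
              mul_le_mul_of_nonneg_left h1 (by positivity)
            nlinarith [hqTnn (a+1)]
          nlinarith [hQpos]
        have hrQ1 : (1:ℚ) ≤ (r:ℚ) := by exact_mod_cast hr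
        have hnQ1 : (1:ℚ) ≤ (n:ℚ) := by exact_mod_cast hn1
        have hckey : 2 * c ^ (k - 2) ≤ (r:ℚ) * (n:ℚ) := by
          have hpowmono : ∀ {s t : ℕ}, s ≤ t → c ^ s ≤ c ^ t := fun h => pow_le_pow_right₀ hc1 h
          rcases Nat.lt_or_ge a k with hlt | hge
          · -- a ≤ k - 1
            rcases Nat.eq_zero_or_pos a with ha0 | ha1
            · -- a = 0 : only shrink phase
              have h1 := hshrink (k - 1 - a) (by omega) (by omega)
              have h2 : c ^ (k-2) ≤ c ^ (k-1-a) := hpowmono (by omega)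
              nlinarith
            · -- 1 ≤ a ≤ k - 1 : both phases
              have h1 := hgrow (a - 1) (by omega) (by omega)
              have h2 := hshrink (k - 1 - a) (by omega) (by omega)
              have h3 : c ^ (a-1) * c ^ (k-1-a) = c ^ (k-2) := by
                rw [← pow_add]
                congr 1
                omega
              nlinarith [pow_nonneg hc0 (a-1), pow_nonneg hc0 (k-1-a), pow_nonneg hc0 (k-2)]
          · -- a = k : only growth phase
            have h1 := hgrow (k - 1) (le_refl _) (by omega)
            have h2 : c ^ (k-2) ≤ c ^ (k-1) := hpowmono (by omega)
            nlinarith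
        -- now convert to the real bound
        have hpow2 : (2:ℚ) ^ (k-2) ≤ ((r:ℚ) * (n:ℚ)) ^ ℓ₀ := by
          have h1 : (2:ℚ) ^ (k-2) ≤ (c ^ ℓ₀) ^ (k-2) :=
            pow_le_pow_left₀ (by norm_num) hc2 _
          have h2 : (c ^ ℓ₀) ^ (k-2) = (c ^ (k-2)) ^ ℓ₀ := by
            rw [← pow_mul, ← pow_mul, Nat.mul_comm]
          have h3 : (c ^ (k-2)) ^ ℓ₀ ≤ ((r:ℚ) * (n:ℚ)) ^ ℓ₀ := by
            apply pow_le_pow_left₀ (pow_nonneg hc0 _)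
            nlinarith [pow_nonneg hc0 (k-2)]
          calc (2:ℚ) ^ (k-2) ≤ (c ^ ℓ₀) ^ (k-2) := h1
          _ = (c ^ (k-2)) ^ ℓ₀ := h2
          _ ≤ ((r:ℚ) * (n:ℚ)) ^ ℓ₀ := h3
        have hpow2R : (2:ℝ) ^ (k-2) ≤ ((r:ℝ) * (n:ℝ)) ^ ℓ₀ := by exact_mod_cast hpow2
        have hlogk : ((k:ℝ) - 2) ≤ (ℓ₀:ℝ) * Real.logb 2 ((r:ℝ) * n) := by
          have h1 : Real.logb 2 ((2:ℝ) ^ (k-2)) ≤ Real.logb 2 (((r:ℝ) * n) ^ ℓ₀) :=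
            Real.logb_le_logb_of_le (by norm_num) (by positivity) hpow2R
          rw [Real.logb_pow, Real.logb_pow, Real.logb_self_eq_one (by norm_num)] at h1
          have h2 : ((k - 2 : ℕ) : ℝ) = (k:ℝ) - 2 := by
            rw [Nat.cast_sub hk2]; norm_num
          calc (k:ℝ) - 2 = ((k - 2 : ℕ) : ℝ) := h2.symm
          _ = ((k - 2 : ℕ) : ℝ) * 1 := by ring
          _ ≤ (ℓ₀:ℝ) * Real.logb 2 ((r:ℝ) * n) := by simpa using h1
        linarith
      · -- k ≤ 1
        have : (k:ℝ) ≤ 2 := by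
          have : k ≤ 2 := by omega
          exact_mod_cast this
        nlinarith [mul_nonneg hl0R hlogb0]
  · -- disconnected case: C₂ = ∅
    have hpre : ¬ G.Preconnected := by
      intro h
      exact hconn ⟨h⟩
    rw [SimpleGraph.Preconnected] at hpre
    push_neg at hpre
    obtain ⟨u, v, huv⟩ := hpre
    right
    refine ⟨∅, Finset.univ.filter (fun x => G.Reachable u x),
      Finset.univ.filter (fun x => ¬ G.Reachable u x), ?_, ?_, ?_, ?_, ?_, ?_, ?_, ?_, ?_⟩
    · exact Finset.disjoint_empty_left _
    · exact Finset.disjoint_empty_left _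
    · rw [Finset.disjoint_left]
      intro x hx hx'
      simp only [Finset.mem_filter, Finset.mem_univ, true_and] at hx hx'
      exact hx' hx
    · ext x
      simp only [Finset.empty_union, Finset.mem_union, Finset.mem_filter, Finset.mem_univ,
        true_and, iff_true]
      exact em _
    · intro x hx y hy hadj
      simp only [Finset.mem_filter, Finset.mem_univ, true_and] at hx hy
      exact hy (hx.trans hadj.reachable)
    · exact ⟨u, Finset.mem_filter.mpr ⟨Finset.mem_univ u, SimpleGraph.Reachable.refl u⟩⟩
    · exact ⟨v, by simp [huv]⟩
    · simp only [Finset.sum_empty]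
      apply div_nonneg (Finset.sum_nonneg fun x _ => (hq x).le) hl0Q.le
    · simp only [Finset.sum_empty]
      apply div_nonneg (Finset.sum_nonneg fun x _ => (hq x).le) hl0Q.le
end
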